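/- arXiv:1410.8628 — 3 statements merged into one kernel-verified Lean document; each statement's English description precedes it below -/
import Mathlib

section
/- In the group algebra ℚ[G_{r,n}], define C_i = Σ_{π ∈ G_{r,n}, des(π) = i} π for i = 0, 1, …, n. Then for all i, k ∈ {0, …, n}, the product C_i·C_k lies in the ℚ-linear span of {C_0, C_1, …, C_n}. (In other words, the formal sums of colored permutations with a fixed number of descents span a subalgebra, the colored Eulerian descent algebra.) -/
open scoped BigOperators

/-- Lexicographic (color-first) strict order on colored letters `(value, color)`. -/
def letterLT (x y : ℕ × ℕ) : Prop :=
  x.2 < y.2 ∨ (x.2 = y.2 ∧ x.1 < y.1)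

instance : DecidableRel letterLT := fun x y => by
  unfold letterLT; infer_instance

/-- The colored permutation group `G_{r,n}`. -/
@[ext] structure ColoredPerm (r n : ℕ) where
  perm : Equiv.Perm (Fin n)
  col : Fin n → ZMod r

namespace ColoredPerm

variable {r n : ℕ}

instance : Mul (ColoredPerm r n) :=
  ⟨fun a b => ⟨a.perm * b.perm, fun i => a.col (b.perm i) + b.col i⟩⟩

instance : One (ColoredPerm r n) :=
  ⟨⟨1, fun _ => 0⟩⟩

instance : Inv (ColoredPerm r n) :=
  ⟨fun a => ⟨a.perm⁻¹, fun i => -a.col (a.perm⁻¹ i)⟩⟩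

instance : Group (ColoredPerm r n) where
  mul_assoc a b c := by
    refine ColoredPerm.ext (mul_assoc _ _ _) ?_
    funext i
    show a.col (b.perm (c.perm i)) + b.col (c.perm i) + c.col i
        = a.col ((b.perm * c.perm) i) + (b.col (c.perm i) + c.col i)
    rw [Equiv.Perm.mul_apply, add_assoc]
  one_mul a := by
    refine ColoredPerm.ext (one_mul _) ?_
    funext i
    show (0 : ZMod r) + a.col i = a.col i
    rw [zero_add]
  mul_one a := by
    refine ColoredPerm.ext (mul_one _) ?_
    funext i
    show a.col ((1 : Equiv.Perm (Fin n)) i) + 0 = a.col i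
    simp
  inv_mul_cancel a := by
    refine ColoredPerm.ext (inv_mul_cancel _) ?_
    funext i
    show -a.col (a.perm⁻¹ (a.perm i)) + a.col i = 0
    simp

/-- `ColoredPerm r n` is equivalent (as a type) to a product. -/
def toProd : ColoredPerm r n ≃ Equiv.Perm (Fin n) × (Fin n → ZMod r) where
  toFun a := (a.perm, a.col)
  invFun p := ⟨p.1, p.2⟩
  left_inv _ := rfl
  right_inv _ := rfl

instance [NeZero r] : Fintype (ColoredPerm r n) := Fintype.ofEquiv _ toProd.symm

instance : DecidableEq (ColoredPerm r n) := toProd.decidableEq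

/-- The `i`-th letter of the one-line notation (0-indexed), as a pair (value, color);
for `i = n` this is the sentinel letter `0₁`. Values are in `{1, …, n}`. -/
def letterAt (a : ColoredPerm r n) (i : ℕ) : ℕ × ℕ :=
  if h : i < n then ((a.perm ⟨i, h⟩ : ℕ) + 1, (a.col ⟨i, h⟩).val) else (0, 1)

/-- The descent set of a colored permutation (positions 0-indexed: position `i`
corresponds to the paper's `i+1 ∈ {1, …, n}`). -/
def Des (a : ColoredPerm r n) : Finset (Fin n) :=
  Finset.univ.filter fun i : Fin n => letterLT (letterAt a (i.1 + 1)) (letterAt a i.1)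

/-- The descent number. -/
def des (a : ColoredPerm r n) : ℕ := (Des a).card

/-- The internal descent number `|Des(π) ∩ {1, …, n−1}|`. -/
def intdes (a : ColoredPerm r n) : ℕ :=
  ((Des a).filter fun i : Fin n => i.1 + 1 < n).card

end ColoredPerm

open ColoredPerm

/-- `C_i`: the formal sum, in the group algebra `ℚ[G_{r,n}]`, of all colored
permutations with exactly `i` descents. -/
noncomputable def eulerianBasis (r n : ℕ) [NeZero r] (i : ℕ) :
    MonoidAlgebra ℚ (ColoredPerm r n) :=
  ∑ π ∈ Finset.univ.filter (fun π : ColoredPerm r n => des π = i),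
    MonoidAlgebra.of ℚ (ColoredPerm r n) π

/-!
Read a letter `x` as the colored letter of level `x / r` and color `x mod r`; the standardization
of a word is its stable sorting permutation, colored by the sorted letters. Let `X_N` be the sum of
the standardizations of all words of length `n` over `{0, …, N - 1}`.

If `N ≡ 1 (mod r)`, the word `a + N b` standardizes to `std a * std (b ∘ sort a)`: sorting by the
pair of keys `(b, a)` is a stable sort by `a` followed by one by `b`. As `b ↦ b ∘ sort a` permutes
the words, `X_N * X_M = X_{M N}`.

A word over `{0, …, r p}` standardizes to `π` exactly when, read along `π`, its letters carry the
colors of `π` and their levels increase weakly, strictly after each descent, the sentinel `0_1`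
bounding the last level by `p` (strictly if the last position is a descent). Subtracting from each
level the number of earlier descents turns these level sequences into the weakly increasing maps
`Fin n → Fin (p + 1 - des π)`. Hence `X_{r p + 1} = ∑ₘ c(p, m) C_m` with `c(p, p) = 1` and
`c(p, m) = 0` for `m > p`. By this unitriangularity the `C_i` and the `X_{r p + 1}` span the same
subspace, which the product rule for the `X`s makes closed under multiplication.
-/

open scoped Finset

namespace Tuple

variable {n : ℕ} {α β : Type*} [LinearOrder α] [LinearOrder β]

theorem sort_comp_strictMono {e : α → β} (he : StrictMono e) (f : Fin n → α) :
    sort (e ∘ f) = sort f := by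
  have hf := eq_sort_iff.1 (rfl : sort f = sort f)
  exact (eq_sort_iff.2 ⟨he.monotone.comp hf.1, fun i j hij h => hf.2 i j hij (he.injective h)⟩).symm

theorem sort_toLex (f : Fin n → α) (g : Fin n → β) :
    sort (fun i => toLex (g i, f i)) = sort f * sort (g ∘ sort f) := by
  set σ := sort f
  set τ := sort (g ∘ σ)
  have hσ := eq_sort_iff.1 (rfl : σ = sort f)
  have hτ := eq_sort_iff.1 (rfl : τ = sort (g ∘ σ))
  refine (eq_sort_iff.2 ⟨fun i j hij => ?_, fun i j hij h => ?_⟩).symm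
  · simp only [Function.comp_apply, Equiv.Perm.mul_apply, Prod.Lex.toLex_le_toLex]
    rcases (hτ.1 hij).lt_or_eq with hg | hg
    · exact Or.inl hg
    · refine Or.inr ⟨hg, hσ.1 ?_⟩
      rcases hij.lt_or_eq with hij | rfl
      · exact (hτ.2 i j hij hg).le
      · exact le_rfl
  · obtain ⟨hg, hf⟩ := Prod.ext_iff.1 (toLex.injective h)
    exact hσ.2 _ _ (hτ.2 i j hij hg) hf

end Tuple

namespace Fin

variable {n : ℕ} {α : Type*} [Preorder α] {f : Fin n → α}

theorem strictMono_of_lt_of_val_succ (h : ∀ a b : Fin n, a.val + 1 = b.val → f a < f b) :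
    StrictMono f := by
  cases n with
  | zero => exact fun a => a.elim0
  | succ m => exact strictMono_iff_lt_succ.2 fun i => h _ _ (by simp)

theorem monotone_of_le_of_val_succ (h : ∀ a b : Fin n, a.val + 1 = b.val → f a ≤ f b) :
    Monotone f := by
  cases n with
  | zero => exact fun a => a.elim0
  | succ m => exact monotone_iff_le_succ.2 fun i => h _ _ (by simp)

end Fin

namespace Nat

theorem mul_add_lt_mul_add_iff {r a b c d : ℕ} (hc : c < r) (hd : d < r) :
    r * a + c < r * b + d ↔ a < b ∨ a = b ∧ c < d := by
  constructor
  · intro h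
    rcases lt_trichotomy a b with hab | rfl | hab
    · exact Or.inl hab
    · exact Or.inr ⟨rfl, by omega⟩
    · have : r * b + r ≤ r * a := by nlinarith
      omega
  · rintro (hab | ⟨rfl, hcd⟩)
    · have : r * a + r ≤ r * b := by nlinarith
      omega
    · omega

theorem mul_add_eq_mul_add_iff {r a b c d : ℕ} (hc : c < r) (hd : d < r) :
    r * a + c = r * b + d ↔ a = b ∧ c = d := by
  constructor
  · intro h
    have h1 := (mul_add_lt_mul_add_iff hc hd).not.1 h.not_lt
    have h2 := (mul_add_lt_mul_add_iff hd hc).not.1 h.not_gt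
    omega
  · rintro ⟨rfl, rfl⟩
    rfl

theorem mul_add_lt_mul_add_one_iff {r a b c : ℕ} (hc : c < r) :
    r * a + c < r * b + 1 ↔ a + (if c = 0 then 0 else 1) ≤ b := by
  split_ifs with h
  · rw [h, add_zero, add_zero]
    constructor
    · intro h
      by_contra hab
      have : r * (b + 1) ≤ r * a := Nat.mul_le_mul_left r (by omega)
      nlinarith
    · intro hab
      have := Nat.mul_le_mul_left r hab
      omega
  · constructor
    · intro h
      by_contra hab
      have : r * b ≤ r * a := Nat.mul_le_mul_left r (by omega)
      omega
    · intro hab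
      have := Nat.mul_le_mul_left r hab
      rw [Nat.mul_add] at this
      omega

end Nat

theorem strictMono_snd_add_mul_fst {N : ℕ} :
    StrictMono fun x : ℕ ×ₗ Fin N => ((ofLex x).2 : ℕ) + N * (ofLex x).1 := by
  intro x y h
  dsimp only
  rcases Prod.Lex.lt_iff.1 h with h | ⟨he, h⟩
  · have := (ofLex x).2.isLt
    have : N * (ofLex x).1 + N ≤ N * (ofLex y).1 := by nlinarith
    omega
  · rw [he]
    exact Nat.add_lt_add_right h _

section DescentCompatible

variable {n : ℕ} (D : Finset (Fin n))

def IsDescentCompatible (q : Fin n → ℕ) : Prop :=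
  ∀ a b : Fin n, a.val + 1 = b.val → q a + (if a ∈ D then 1 else 0) ≤ q b

def countBefore (k : Fin n) : ℕ := #{j ∈ D | j < k}

variable {D}

theorem countBefore_of_val_succ {a b : Fin n} (hab : a.val + 1 = b.val) :
    countBefore D b = countBefore D a + if a ∈ D then 1 else 0 := by
  have hsplit : {j ∈ D | j < b} = {j ∈ D | j < a ∨ j = a} :=
    Finset.filter_congr fun j _ => by simp only [Fin.lt_def, Fin.ext_iff]; omega
  rw [countBefore, countBefore, hsplit, Finset.filter_or,
    Finset.card_union_of_disjoint (Finset.disjoint_filter.2 fun j _ h => h.ne), Finset.filter_eq']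
  split_ifs <;> simp

theorem countBefore_top_add [NeZero n] :
    countBefore D ⊤ + (if ⊤ ∈ D then 1 else 0) = #D := by
  rw [countBefore, ← Finset.card_filter_add_card_filter_not (s := D) (fun j => j < ⊤)]
  simp only [not_lt_top_iff, Finset.filter_eq']
  split_ifs <;> simp

theorem IsDescentCompatible.countBefore_le {q : Fin n → ℕ} (hq : IsDescentCompatible D q)
    (k : Fin n) : countBefore D k ≤ q k := by
  obtain ⟨k, hk⟩ := k
  induction k with
  | zero => simp [countBefore, Fin.lt_def]
  | succ k ih =>
    have hstep := hq ⟨k, by omega⟩ ⟨k + 1, hk⟩ rfl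
    have := ih (by omega)
    rw [countBefore_of_val_succ (a := ⟨k, by omega⟩) rfl]
    split_ifs at hstep ⊢ <;> omega

theorem IsDescentCompatible.monotone_sub_countBefore {q : Fin n → ℕ}
    (hq : IsDescentCompatible D q) : Monotone fun k => q k - countBefore D k :=
  Fin.monotone_of_le_of_val_succ fun a b hab => by
    have hstep := hq a b hab
    have := hq.countBefore_le a
    rw [countBefore_of_val_succ hab]
    split_ifs at hstep ⊢ <;> omega

theorem Monotone.isDescentCompatible_add_countBefore {w : Fin n → ℕ} (hw : Monotone w) :
    IsDescentCompatible D fun k => w k + countBefore D k := fun a b hab => by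
  have := hw (Fin.le_def.2 (by omega : a.val ≤ b.val))
  dsimp only
  rw [countBefore_of_val_succ hab]
  split_ifs <;> omega

end DescentCompatible

def monotoneCount (n k : ℕ) : ℕ := #{w : Fin n → Fin k | Monotone w}

theorem monotoneCount_one (n : ℕ) : monotoneCount n 1 = 1 := by
  have : ∀ w : Fin n → Fin 1, Monotone w := fun w a b _ => (Subsingleton.elim (w a) (w b)).le
  simp [monotoneCount, this]

theorem monotoneCount_zero (n : ℕ) [NeZero n] : monotoneCount n 0 = 0 := by
  simp [monotoneCount]

namespace ColoredPerm

variable {r n : ℕ}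

@[simps]
def std (w : Fin n → ℕ) : ColoredPerm r n :=
  ⟨Tuple.sort w, fun i => (w (Tuple.sort w i) : ZMod r)⟩

theorem std_eq_iff {w : Fin n → ℕ} {π : ColoredPerm r n} :
    std w = π ↔ StrictMono (fun k => toLex (w (π.perm k), π.perm k)) ∧
      ∀ k, (w (π.perm k) : ZMod r) = π.col k := by
  rw [ColoredPerm.ext_iff, std_perm, funext_iff]
  simp only [std_col]
  constructor
  · rintro ⟨hp, hc⟩
    rw [← hp]
    exact ⟨Tuple.eq_sort_iff'.1 rfl, hc⟩
  · rintro ⟨hm, hc⟩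
    have hp : Tuple.sort w = π.perm := (Tuple.eq_sort_iff'.2 hm).symm
    exact ⟨hp, fun k => by rw [hp]; exact hc k⟩

theorem std_add_mul {N : ℕ} (hN : (N : ZMod r) = 1) (a : Fin n → Fin N) (b : Fin n → ℕ) :
    (std fun i => (a i : ℕ) + N * b i) =
      (std fun i => (a i : ℕ) : ColoredPerm r n) * std (b ∘ Tuple.sort fun i => (a i : ℕ)) := by
  have hsort : Tuple.sort (fun i => (a i : ℕ) + N * b i) =
      Tuple.sort (fun i => (a i : ℕ)) * Tuple.sort (b ∘ Tuple.sort fun i => (a i : ℕ)) := by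
    rw [show (fun i => (a i : ℕ) + N * b i) =
        (fun x : ℕ ×ₗ Fin N => ((ofLex x).2 : ℕ) + N * (ofLex x).1) ∘ fun i => toLex (b i, a i)
        from rfl,
      Tuple.sort_comp_strictMono strictMono_snd_add_mul_fst, Tuple.sort_toLex,
      ← Tuple.sort_comp_strictMono Fin.val_strictMono a]
    rfl
  refine ColoredPerm.ext hsort (funext fun i => ?_)
  simp only [std_col, hsort]
  push_cast
  rw [hN, one_mul]
  rfl

noncomputable def wordSum (r n N : ℕ) : MonoidAlgebra ℚ (ColoredPerm r n) :=
  ∑ w : Fin n → Fin N, MonoidAlgebra.of ℚ _ (std fun i => (w i : ℕ))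

def wordPairEquiv (n N M : ℕ) : (Fin n → Fin N) × (Fin n → Fin M) ≃ (Fin n → Fin (M * N)) :=
  (Equiv.prodComm _ _).trans <| (Equiv.arrowProdEquivProdArrow _ _ _).symm.trans
    (Equiv.arrowCongr (Equiv.refl _) finProdFinEquiv)

theorem wordPairEquiv_apply_val {N M : ℕ} (a : Fin n → Fin N) (b : Fin n → Fin M) (i : Fin n) :
    (wordPairEquiv n N M (a, b) i : ℕ) = a i + N * b i := rfl

theorem wordSum_mul {N M : ℕ} (hN : (N : ZMod r) = 1) :
    wordSum r n N * wordSum r n M = wordSum r n (M * N) := by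
  simp only [wordSum, Finset.sum_mul_sum, ← map_mul]
  rw [← (wordPairEquiv n N M).sum_comp, Fintype.sum_prod_type]
  refine Finset.sum_congr rfl fun a _ => ?_
  rw [← (Equiv.arrowCongr (Tuple.sort fun i => (a i : ℕ)).symm (Equiv.refl (Fin M))).sum_comp]
  refine Finset.sum_congr rfl fun b _ => ?_
  simp only [wordPairEquiv_apply_val, std_add_mul hN]
  rfl

theorem mem_Des_iff_of_val_succ (π : ColoredPerm r n) {a b : Fin n} (hab : a.val + 1 = b.val) :
    a ∈ Des π ↔ toLex ((π.col b).val, π.perm b) < toLex ((π.col a).val, π.perm a) := by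
  have hb : a.val + 1 < n := hab ▸ b.isLt
  have e : (⟨a.val + 1, hb⟩ : Fin n) = b := Fin.ext hab
  simp only [Des, Finset.mem_filter, Finset.mem_univ, true_and, letterAt, letterLT,
    dif_pos hb, dif_pos a.isLt, e, Fin.eta, Prod.Lex.toLex_lt_toLex, Fin.lt_def]
  omega

theorem mem_Des_top [NeZero n] (π : ColoredPerm r n) : ⊤ ∈ Des π ↔ (π.col ⊤).val ≠ 0 := by
  have h : ¬((⊤ : Fin n).val + 1 < n) := by rw [Fin.val_top]; omega
  simp only [Des, Finset.mem_filter, Finset.mem_univ, true_and, letterAt, letterLT,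
    dif_neg h, dif_pos (⊤ : Fin n).isLt, Fin.eta]
  omega

theorem des_le (π : ColoredPerm r n) : des π ≤ n :=
  (Finset.card_filter_le _ _).trans_eq (Finset.card_fin n)

theorem mul_div_add_val {x : ℕ} {c : ZMod r} (h : (x : ZMod r) = c) : r * (x / r) + c.val = x := by
  rw [← h, ZMod.val_natCast, Nat.div_add_mod]

/-- Inverts `f ↦ (k ↦ f (π k) / r - countBefore (Des π) k)` on the words standardizing to `π`. -/
def liftWord (π : ColoredPerm r n) (w : Fin n → ℕ) (j : Fin n) : ℕ :=
  r * (w (π.perm⁻¹ j) + countBefore (Des π) (π.perm⁻¹ j)) + (π.col (π.perm⁻¹ j)).val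

theorem liftWord_perm (π : ColoredPerm r n) (w : Fin n → ℕ) (k : Fin n) :
    liftWord π w (π.perm k) = r * (w k + countBefore (Des π) k) + (π.col k).val := by
  simp [liftWord]

section

variable [NeZero r]

theorem toLex_lt_toLex_iff_of_val_succ (π : ColoredPerm r n) (q : Fin n → ℕ) {a b : Fin n}
    (hab : a.val + 1 = b.val) :
    toLex (r * q a + (π.col a).val, π.perm a) < toLex (r * q b + (π.col b).val, π.perm b) ↔
      q a + (if a ∈ Des π then 1 else 0) ≤ q b := by
  have hne : (π.perm a : ℕ) ≠ π.perm b :=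
    Fin.val_ne_of_ne (π.perm.injective.ne (Fin.ne_of_val_ne (by omega)))
  have ha := ZMod.val_lt (π.col a)
  have hb := ZMod.val_lt (π.col b)
  have hD := mem_Des_iff_of_val_succ π hab
  simp only [Prod.Lex.toLex_lt_toLex, Fin.lt_def] at hD ⊢
  rw [Nat.mul_add_lt_mul_add_iff ha hb, Nat.mul_add_eq_mul_add_iff ha hb]
  by_cases h : a ∈ Des π
  · rw [if_pos h]
    have := hD.1 h
    omega
  · rw [if_neg h]
    have := mt hD.2 h
    omega

theorem strictMono_toLex_iff (π : ColoredPerm r n) (q : Fin n → ℕ) :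
    StrictMono (fun k => toLex (r * q k + (π.col k).val, π.perm k)) ↔
      IsDescentCompatible (Des π) q :=
  ⟨fun h a b hab => (toLex_lt_toLex_iff_of_val_succ π q hab).1 (h (Fin.lt_def.2 (by omega))),
    fun h => Fin.strictMono_of_lt_of_val_succ fun a b hab =>
      (toLex_lt_toLex_iff_of_val_succ π q hab).2 (h a b hab)⟩

theorem std_eq_iff_isDescentCompatible {w : Fin n → ℕ} {π : ColoredPerm r n} :
    std w = π ↔ (∀ k, (w (π.perm k) : ZMod r) = π.col k) ∧
      IsDescentCompatible (Des π) fun k => w (π.perm k) / r := by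
  rw [std_eq_iff, ← strictMono_toLex_iff, and_comm]
  refine and_congr_right fun hc => ?_
  simp only [mul_div_add_val (hc _)]

theorem std_liftWord (π : ColoredPerm r n) {w : Fin n → ℕ} (hw : Monotone w) :
    std (liftWord π w) = π := by
  refine std_eq_iff_isDescentCompatible.2 ⟨fun k => ?_, ?_⟩
  · simp [liftWord_perm]
  · simp only [liftWord_perm, Nat.mul_add_div (NeZero.pos r), Nat.div_eq_of_lt (ZMod.val_lt _),
      add_zero]
    exact hw.isDescentCompatible_add_countBefore

theorem sum_smul_eulerianBasis (a : ℕ → ℚ) (s : Finset ℕ)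
    (hs : ∀ π : ColoredPerm r n, des π ∉ s → a (des π) = 0) :
    ∑ m ∈ s, a m • eulerianBasis r n m = ∑ π, a (des π) • MonoidAlgebra.of ℚ _ π := by
  simp only [eulerianBasis, Finset.smul_sum]
  have hfiber : ∀ m, ∑ π with des π = m, a m • MonoidAlgebra.of ℚ _ π =
      ∑ π with des π = m, a (des π) • MonoidAlgebra.of ℚ (ColoredPerm r n) π :=
    fun m => Finset.sum_congr rfl fun π hπ => by rw [(Finset.mem_filter.1 hπ).2]
  rw [Finset.sum_congr rfl fun m _ => hfiber m, Finset.sum_fiberwise_eq_sum_filter,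
    Finset.sum_filter_of_ne]
  intro π _ hπ
  by_contra hm
  exact hπ (by rw [hs π hm, zero_smul])

variable [NeZero n]

theorem mul_add_col_top_lt_iff (π : ColoredPerm r n) (q p : ℕ) :
    r * q + (π.col ⊤).val < r * p + 1 ↔ q + (if ⊤ ∈ Des π then 1 else 0) ≤ p := by
  rw [Nat.mul_add_lt_mul_add_one_iff (ZMod.val_lt _)]
  simp only [mem_Des_top, ite_not]

theorem sub_countBefore_lt_of_std_eq {p : ℕ} {π : ColoredPerm r n} {f : Fin n → Fin (r * p + 1)}
    (hf : std (fun i => (f i : ℕ)) = π) (k : Fin n) :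
    (f (π.perm k) : ℕ) / r - countBefore (Des π) k < p + 1 - des π := by
  obtain ⟨hc, hq⟩ := std_eq_iff_isDescentCompatible.1 hf
  have htop := (mul_add_col_top_lt_iff π _ p).1 ((mul_div_add_val (hc ⊤)).symm ▸ (f (π.perm ⊤)).isLt)
  have hk := hq.monotone_sub_countBefore (le_top : k ≤ ⊤)
  have := hq.countBefore_le ⊤
  have := countBefore_top_add (D := Des π)
  rw [des]
  dsimp only at hk
  split_ifs at htop this <;> omega

theorem liftWord_lt (π : ColoredPerm r n) {p : ℕ} {w : Fin n → ℕ} (hw : Monotone w)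
    (hp : w ⊤ + des π ≤ p) (j : Fin n) : liftWord π w j < r * p + 1 := by
  have hmono : Monotone fun k => liftWord π w (π.perm k) :=
    Prod.Lex.monotone_fst_ofLex.comp (std_eq_iff.1 (std_liftWord π hw)).1.monotone
  obtain ⟨k, rfl⟩ := π.perm.surjective j
  refine (hmono le_top).trans_lt ?_
  dsimp only
  rw [liftWord_perm, mul_add_col_top_lt_iff, add_assoc, countBefore_top_add]
  exact hp

theorem card_std_eq (π : ColoredPerm r n) (p : ℕ) :
    #{f : Fin n → Fin (r * p + 1) | std (fun i => (f i : ℕ)) = π} =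
      monotoneCount n (p + 1 - des π) := by
  refine Finset.card_bij'
    (fun f hf k => ⟨_, sub_countBefore_lt_of_std_eq (Finset.mem_filter.1 hf).2 k⟩)
    (fun w hw j => ⟨liftWord π (fun k => w k) j,
      liftWord_lt π (Fin.val_strictMono.monotone.comp (Finset.mem_filter.1 hw).2)
        (by have := (w ⊤).isLt; dsimp only [Function.comp_apply]; omega) j⟩)
    (fun f hf => ?_) (fun w hw => ?_) (fun f hf => ?_) (fun w hw => ?_)
  · obtain ⟨-, hq⟩ := std_eq_iff_isDescentCompatible.1 (Finset.mem_filter.1 hf).2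
    simp only [Finset.mem_filter, Finset.mem_univ, true_and]
    exact fun a b hab => Fin.le_def.2 (hq.monotone_sub_countBefore hab)
  · simp only [Finset.mem_filter, Finset.mem_univ, true_and]
    exact std_liftWord π (Fin.val_strictMono.monotone.comp (Finset.mem_filter.1 hw).2)
  · obtain ⟨hc, hq⟩ := std_eq_iff_isDescentCompatible.1 (Finset.mem_filter.1 hf).2
    funext j
    obtain ⟨k, rfl⟩ := π.perm.surjective j
    ext
    simp only [liftWord_perm]
    rw [Nat.sub_add_cancel (hq.countBefore_le k), mul_div_add_val (hc k)]
  · funext k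
    ext
    simp only [liftWord_perm, Nat.mul_add_div (NeZero.pos r), Nat.div_eq_of_lt (ZMod.val_lt _),
      add_zero, Nat.add_sub_cancel]

theorem wordSum_eq_sum_smul (p : ℕ) :
    wordSum r n (r * p + 1) =
      ∑ π, (monotoneCount n (p + 1 - des π) : ℚ) • MonoidAlgebra.of ℚ _ π := by
  rw [wordSum, ← Finset.sum_fiberwise Finset.univ fun f : Fin n → Fin (r * p + 1) =>
    (std fun i => (f i : ℕ) : ColoredPerm r n)]
  refine Finset.sum_congr rfl fun π _ => ?_
  rw [Finset.sum_congr rfl fun f hf => by rw [(Finset.mem_filter.1 hf).2], Finset.sum_const,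
    card_std_eq, Nat.cast_smul_eq_nsmul]

theorem wordSum_mem_span_eulerianBasis (p : ℕ) :
    wordSum r n (r * p + 1) ∈ Submodule.span ℚ {x | ∃ m ≤ n, x = eulerianBasis r n m} := by
  rw [wordSum_eq_sum_smul, ← sum_smul_eulerianBasis (fun m => (monotoneCount n (p + 1 - m) : ℚ))
    (Finset.range (n + 1)) fun π h => absurd (Finset.mem_range.2 (Nat.lt_succ_of_le (des_le π))) h]
  exact Submodule.sum_mem _ fun m hm => Submodule.smul_mem _ _
    (Submodule.subset_span ⟨m, Nat.lt_succ_iff.1 (Finset.mem_range.1 hm), rfl⟩)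

theorem eulerianBasis_mem_span_wordSum (i : ℕ) :
    eulerianBasis r n i ∈ Submodule.span ℚ (Set.range fun p => wordSum r n (r * p + 1)) := by
  induction i using Nat.strong_induction_on with
  | _ i ih =>
  have hX := wordSum_eq_sum_smul (r := r) (n := n) i
  rw [← sum_smul_eulerianBasis (fun m => (monotoneCount n (i + 1 - m) : ℚ))
      (Finset.range (i + 1)) fun π h => by
      rw [Nat.sub_eq_zero_of_le (by simpa using h), monotoneCount_zero, Nat.cast_zero],
    Finset.sum_range_succ, Nat.add_sub_cancel_left, monotoneCount_one, Nat.cast_one,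
    one_smul] at hX
  rw [eq_sub_of_add_eq' hX.symm]
  exact Submodule.sub_mem _ (Submodule.subset_span ⟨i, rfl⟩) (Submodule.sum_mem _ fun m hm =>
    Submodule.smul_mem _ _ (ih m (Finset.mem_range.1 hm)))

end

end ColoredPerm

open ColoredPerm

theorem eulerian_descent_algebra_general (r n : ℕ) [NeZero r] (hn : 1 ≤ n)
    (i k : ℕ) :
    eulerianBasis r n i * eulerianBasis r n k ∈
      Submodule.span ℚ {x : MonoidAlgebra ℚ (ColoredPerm r n) |
        ∃ m ≤ n, x = eulerianBasis r n m} := by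
  have : NeZero n := ⟨by omega⟩
  set W := Submodule.span ℚ (Set.range fun p => wordSum r n (r * p + 1))
  have hmul : W * W ≤ W := by
    rw [Submodule.span_mul_span, Submodule.span_le]
    rintro _ ⟨_, ⟨p, rfl⟩, _, ⟨s, rfl⟩, rfl⟩
    refine Submodule.subset_span ⟨r * s * p + s + p, ?_⟩
    dsimp only
    rw [wordSum_mul (by simp : ((r * p + 1 : ℕ) : ZMod r) = 1)]
    ring_nf
  have hle : W ≤ Submodule.span ℚ {x | ∃ m ≤ n, x = eulerianBasis r n m} :=
    Submodule.span_le.2 (Set.range_subset_iff.2 wordSum_mem_span_eulerianBasis)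
  exact hle (hmul (Submodule.mul_mem_mul (eulerianBasis_mem_span_wordSum i)
    (eulerianBasis_mem_span_wordSum k)))

/-- The products `C_i · C_k` lie in the `ℚ`-span of `C_0, …, C_n`:
the colored Eulerian descent algebra is closed under multiplication. -/
theorem eulerian_descent_algebra (r n : ℕ) [NeZero r] (hn : 1 ≤ n)
    (i k : ℕ) (hi : i ≤ n) (hk : k ≤ n) :
    eulerianBasis r n i * eulerianBasis r n k ∈
      Submodule.span ℚ {x : MonoidAlgebra ℚ (ColoredPerm r n) |
        ∃ m ≤ n, x = eulerianBasis r n m} :=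
  eulerian_descent_algebra_general r n hn i k
end

section
/- Let C_i = Σ_{π ∈ G_{r,n}, des(π) = i} π ∈ ℚ[G_{r,n}] for i = 0, …, n, and for each i ∈ {0, …, n} let c_i ∈ ℚ[G_{r,n}] be the coefficient of x^i when Σ_{π ∈ G_{r,n}} b((x − 1)/r − des(π))·π is expanded as a polynomial in x with coefficients in ℚ[G_{r,n}], where b(z) = (1/n!)·∏_{m=1}^{n} (z + m). Then the ℚ-linear span of {c_0, c_1, …, c_n} equals the ℚ-linear span of {C_0, C_1, …, C_n}; that is, the orthogonal idempotents c_i span the colored Eulerian descent algebra. -/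
open scoped BigOperators

open ColoredPerm

/-- The polynomial (in the variable `x`, over `ℚ`)
`b((x − 1)/r − d) = (1/n!) ∏_{m=1}^{n} ((x − 1)/r − d + m)`. -/
noncomputable def idemPoly (r n : ℕ) (d : ℕ) : Polynomial ℚ :=
  Polynomial.C ((n.factorial : ℚ))⁻¹ *
    ∏ m ∈ Finset.Icc 1 n,
      (Polynomial.C ((r : ℚ))⁻¹ * (Polynomial.X - 1) -
        Polynomial.C (d : ℚ) + Polynomial.C (m : ℚ))

/-- `c_i`: the coefficient of `x^i` in `Σ_{π ∈ G_{r,n}} b((x−1)/r − des(π))·π`,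
viewed as an element of the group algebra `ℚ[G_{r,n}]`. -/
noncomputable def eulerianIdem (r n : ℕ) [NeZero r] (i : ℕ) :
    MonoidAlgebra ℚ (ColoredPerm r n) :=
  ∑ π : ColoredPerm r n,
    (idemPoly r n (des π)).coeff i • MonoidAlgebra.of ℚ (ColoredPerm r n) π

/-!
Grouping the sum defining `c_i` by descent number gives `c_i = Σ_d [x^i] b((x-1)/r - d) · C_d`,
so it suffices that the coefficient matrix of the polynomials `p_d = b((x-1)/r - d)`,
`0 ≤ d ≤ n`, is invertible. Evaluating `p_d` at `x_k = 1 - r(n+1-k)` gives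
`(1/n!) ∏_{m=1}^n (m + k - n - 1 - d)`, which vanishes for `d < k` and not for `d = k`;
so the evaluation matrix, a Vandermonde matrix times the coefficient matrix, is triangular
with nonzero diagonal.
-/

open Polynomial Finset Matrix

lemma ColoredPerm.des_le_s4 {r n : ℕ} (a : ColoredPerm r n) : des a ≤ n :=
  (card_le_univ _).trans_eq (Fintype.card_fin n)

lemma setOf_exists_le_eq_range {α : Type*} (f : ℕ → α) (n : ℕ) :
    {x | ∃ m ≤ n, x = f m} = Set.range fun i : Fin (n + 1) => f i := by
  ext x
  constructor
  · rintro ⟨m, hm, rfl⟩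
    exact ⟨⟨m, by omega⟩, rfl⟩
  · rintro ⟨i, rfl⟩
    exact ⟨i, by omega, rfl⟩

section SpanMatrix

variable {ι R M : Type*} [Fintype ι] [CommRing R] [AddCommGroup M] [Module R M]

lemma span_range_sum_smul_le (A : Matrix ι ι R) (v : ι → M) :
    Submodule.span R (Set.range fun i => ∑ j, A i j • v j) ≤ Submodule.span R (Set.range v) :=
  Submodule.span_le.mpr <| Set.range_subset_iff.mpr fun _ =>
    Submodule.sum_mem _ fun j _ => Submodule.smul_mem _ _ (Submodule.subset_span ⟨j, rfl⟩)

lemma span_range_sum_smul_eq [DecidableEq ι] {A : Matrix ι ι R} (hA : IsUnit A.det)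
    (v : ι → M) :
    Submodule.span R (Set.range fun i => ∑ j, A i j • v j) = Submodule.span R (Set.range v) := by
  refine (span_range_sum_smul_le A v).antisymm ?_
  have hv : (fun k => ∑ i, A⁻¹ k i • ∑ j, A i j • v j) = v := by
    funext k
    simp_rw [smul_sum, smul_smul]
    rw [sum_comm]
    simp_rw [← sum_smul, ← mul_apply, nonsing_inv_mul A hA, one_apply, ite_smul, one_smul,
      zero_smul, sum_ite_eq, if_pos (mem_univ _)]
  calc Submodule.span R (Set.range v) = _ := by rw [hv]
    _ ≤ _ := span_range_sum_smul_le A⁻¹ _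

end SpanMatrix

lemma Matrix.of_eval_eq_vandermonde_mul {R : Type*} [CommRing R] {n : ℕ} (v : Fin n → R)
    (p : Fin n → R[X]) (hp : ∀ j, (p j).natDegree < n) :
    Matrix.of (fun i j => (p j).eval (v i)) =
      vandermonde v * Matrix.of (fun i j : Fin n => (p j).coeff i) := by
  ext i j
  rw [of_apply, eval_eq_sum_range' (hp j), ← Fin.sum_univ_eq_sum_range, mul_apply]
  simp only [vandermonde_apply, of_apply, mul_comm]

lemma Matrix.det_coeff_ne_zero_of_det_eval_ne_zero {R : Type*} [CommRing R] {n : ℕ}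
    (v : Fin n → R) (p : Fin n → R[X]) (hp : ∀ j, (p j).natDegree < n)
    (h : (Matrix.of fun i j => (p j).eval (v i)).det ≠ 0) :
    (Matrix.of fun i j : Fin n => (p j).coeff i).det ≠ 0 := by
  rw [of_eval_eq_vandermonde_mul v p hp, det_mul] at h
  exact right_ne_zero_of_mul h

section IdemPoly

variable (r n : ℕ)

lemma idemPoly_natDegree_le (d : ℕ) : (idemPoly r n d).natDegree ≤ n := by
  unfold idemPoly
  refine (natDegree_C_mul_le _ _).trans <| (natDegree_prod_le _ _).trans ?_
  refine (sum_le_card_nsmul _ _ 1 fun m _ => ?_).trans (by simp)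
  compute_degree

variable [NeZero r]

lemma idemPoly_eval_one_sub_mul (d : ℕ) (t : ℚ) :
    (idemPoly r n d).eval (1 - r * t) =
      (n.factorial : ℚ)⁻¹ * ∏ m ∈ Icc 1 n, ((m : ℚ) - t - d) := by
  have hr : (r : ℚ) ≠ 0 := Nat.cast_ne_zero.mpr (NeZero.ne r)
  unfold idemPoly
  rw [eval_mul, eval_C, eval_prod]
  congr 1
  refine prod_congr rfl fun m _ => ?_
  simp only [eval_add, eval_sub, eval_mul, eval_C, eval_X, eval_one]
  field_simp
  ring

variable {r n}

lemma idemPoly_eval_eq_zero {t d : ℕ} (h₁ : 1 ≤ t + d) (h₂ : t + d ≤ n) :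
    (idemPoly r n d).eval (1 - (r : ℚ) * t) = 0 := by
  rw [idemPoly_eval_one_sub_mul]
  refine mul_eq_zero_of_right _ (prod_eq_zero (i := t + d) (mem_Icc.mpr ⟨h₁, h₂⟩) ?_)
  push_cast
  ring

lemma idemPoly_eval_ne_zero {t d : ℕ} (h : n < t + d) :
    (idemPoly r n d).eval (1 - (r : ℚ) * t) ≠ 0 := by
  rw [idemPoly_eval_one_sub_mul]
  refine mul_ne_zero (inv_ne_zero (Nat.cast_ne_zero.mpr n.factorial_ne_zero)) ?_
  refine prod_ne_zero_iff.mpr fun m hm => sub_ne_zero.mpr (ne_of_lt ?_)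
  have hmn : m < t + d := (mem_Icc.mp hm).2.trans_lt h
  have : (m : ℚ) < t + d := by exact_mod_cast hmn
  linarith

variable (r n)

lemma isUnit_det_idemPoly_coeff :
    IsUnit (Matrix.of fun i d : Fin (n + 1) => (idemPoly r n d).coeff i).det := by
  let v : Fin (n + 1) → ℚ := fun k => 1 - r * ((n + 1 - k : ℕ) : ℚ)
  have htri :
      (Matrix.of fun k d : Fin (n + 1) => (idemPoly r n d).eval (v k)).IsUpperTriangular :=
    fun k d (hdk : d < k) => idemPoly_eval_eq_zero (t := n + 1 - k) (by omega) (by omega)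
  refine isUnit_iff_ne_zero.mpr <| det_coeff_ne_zero_of_det_eval_ne_zero v _
    (fun d => (idemPoly_natDegree_le r n d).trans_lt n.lt_succ_self) ?_
  rw [det_of_isUpperTriangular htri]
  exact prod_ne_zero_iff.mpr fun k _ => idemPoly_eval_ne_zero (t := n + 1 - k) (by omega)

end IdemPoly

lemma eulerianIdem_eq_sum (r n : ℕ) [NeZero r] (i : ℕ) :
    eulerianIdem r n i = ∑ d : Fin (n + 1), (idemPoly r n d).coeff i • eulerianBasis r n d := by
  rw [Fin.sum_univ_eq_sum_range (fun d => (idemPoly r n d).coeff i • eulerianBasis r n d),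
    eulerianIdem, ← sum_fiberwise_of_maps_to (g := des) (t := range (n + 1))
      fun π _ => mem_range.mpr (Nat.lt_succ_of_le π.des_le_s4)]
  refine sum_congr rfl fun d _ => ?_
  rw [eulerianBasis, smul_sum]
  exact sum_congr rfl fun π hπ => by rw [(mem_filter.mp hπ).2]

theorem eulerianIdem_span_general (r n : ℕ) [NeZero r] :
    Submodule.span ℚ {x : MonoidAlgebra ℚ (ColoredPerm r n) |
        ∃ m ≤ n, x = eulerianIdem r n m} =
      Submodule.span ℚ {x : MonoidAlgebra ℚ (ColoredPerm r n) |
        ∃ m ≤ n, x = eulerianBasis r n m} := by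
  rw [setOf_exists_le_eq_range, setOf_exists_le_eq_range]
  simp_rw [eulerianIdem_eq_sum]
  exact span_range_sum_smul_eq (isUnit_det_idemPoly_coeff r n) _

/-- The `ℚ`-span of the orthogonal idempotents `c_0, …, c_n` equals the `ℚ`-span of
the descent-number sums `C_0, …, C_n`: the `c_i` span the colored Eulerian
descent algebra. -/
theorem eulerianIdem_span (r n : ℕ) [NeZero r] (hn : 1 ≤ n) :
    Submodule.span ℚ {x : MonoidAlgebra ℚ (ColoredPerm r n) |
        ∃ m ≤ n, x = eulerianIdem r n m} =
      Submodule.span ℚ {x : MonoidAlgebra ℚ (ColoredPerm r n) |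
        ∃ m ≤ n, x = eulerianBasis r n m} :=
  eulerianIdem_span_general r n
end

section
/- (Fundamental Theorem of Colored P-partitions) For every r-colored poset P there is a bijection between A(P), the set of colored P-partitions of P with parts in {0, …, r−1} × (ℕ ∪ {∞}), and the disjoint union, over all linear extensions w ∈ L(P) and all colored words π ∈ CL(w), of the sets A(π) of colored π-partitions with parts in {0, …, r−1} × (ℕ ∪ {∞}). -/
open scoped BigOperators

/-- Weak lexicographic order on parts `(color, value)` of `[0,j]_{(r)}`. -/
def partLE (a b : ℕ × ℕ) : Prop :=
  a.1 < b.1 ∨ (a.1 = b.1 ∧ a.2 ≤ b.2)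

/-- Strict lexicographic order on parts `(color, value)` of `[0,j]_{(r)}`. -/
def partLT (a b : ℕ × ℕ) : Prop :=
  a.1 < b.1 ∨ (a.1 = b.1 ∧ a.2 < b.2)

/-- `x^{(k)}`: shift the color of the colored letter `x = (value, color)` down by `k` mod `r`. -/
def shiftLetter (r k : ℕ) (x : ℕ × ℕ) : ℕ × ℕ :=
  (x.1, (x.2 + r - k % r) % r)

/-- An `r`-colored poset: a finite poset whose elements are the symbols
`0_1, …, 0_{r−1}` (encoded as `(0, m)`) together with finitely many colored letters
(pairs `(value, color)` with positive value and color `< r`) having pairwise distinct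
values, such that `0_1 ≺ 0_2 ≺ ⋯ ≺ 0_{r−1}`. -/
structure ColoredPoset (r : ℕ) where
  elems : Finset (ℕ × ℕ)
  rel : ℕ × ℕ → ℕ × ℕ → Prop
  zero_mem : ∀ m, 1 ≤ m → m < r → ((0 : ℕ), m) ∈ elems
  zero_only : ∀ x ∈ elems, x.1 = 0 → 1 ≤ x.2 ∧ x.2 < r
  col_lt : ∀ x ∈ elems, x.2 < r
  val_inj : ∀ x ∈ elems, ∀ y ∈ elems, 1 ≤ x.1 → x.1 = y.1 → x = y
  rel_refl : ∀ x ∈ elems, rel x x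
  rel_antisymm : ∀ x ∈ elems, ∀ y ∈ elems, rel x y → rel y x → x = y
  rel_trans : ∀ x ∈ elems, ∀ y ∈ elems, ∀ z ∈ elems, rel x y → rel y z → rel x z
  zero_chain : ∀ m m', 1 ≤ m → m ≤ m' → m' < r → rel (0, m) (0, m')

/-- A colored `P`-partition of the `r`-colored poset `P` with parts in
`[0,j]_{(r)} = {0,…,r−1} × {0,…,j}` (a part `(k, u)` lies in block `X_k`):
(i) `f(0_m) = (m, 0)`; (ii) `f` is weakly increasing along `≺`;
(iii) strict increase when both parts lie in block `k` and the `k`-shifted letters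
decrease; (iv) only a letter of color `k` may take the maximal value `(k, j)`. -/
def IsCPP (r j : ℕ) (P : ColoredPoset r) (f : {x // x ∈ P.elems} → ℕ × ℕ) : Prop :=
  (∀ x, (f x).1 < r ∧ (f x).2 ≤ j) ∧
  (∀ m (h1 : 1 ≤ m) (h2 : m < r), f ⟨(0, m), P.zero_mem m h1 h2⟩ = (m, 0)) ∧
  (∀ x y, P.rel x.1 y.1 → partLE (f x) (f y)) ∧
  (∀ x y, P.rel x.1 y.1 → (f x).1 = (f y).1 →
      letterLT (shiftLetter r (f x).1 y.1) (shiftLetter r (f x).1 x.1) →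
      partLT (f x) (f y)) ∧
  (∀ x, (f x).2 = j → x.1.2 = (f x).1)

/-- The order polynomial `Ω_P(j)`: the number of colored `P`-partitions with parts
in `[0,j]_{(r)}`. -/
noncomputable def Omega (r j : ℕ) (P : ColoredPoset r) : ℕ :=
  Nat.card {f : {x // x ∈ P.elems} → ℕ × ℕ // IsCPP r j P f}

/-- `w` is a linear extension of the `r`-colored poset `P`: a word listing each
element of `P` exactly once, with `x` before `y` whenever `x ≺ y`. -/
def IsLinExt {r : ℕ} (P : ColoredPoset r) (w : List (ℕ × ℕ)) : Prop :=
  w.Nodup ∧ (∀ x, x ∈ w ↔ x ∈ P.elems) ∧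
  ∀ x ∈ P.elems, ∀ y ∈ P.elems, P.rel x y → x ≠ y → w.idxOf x < w.idxOf y

/-- The number of zero symbols appearing strictly before `x` in the word `w`. -/
def zerosBefore (w : List (ℕ × ℕ)) (x : ℕ × ℕ) : ℕ :=
  ((w.take (w.idxOf x)).filter fun z => decide (z.1 = 0)).length

/-- The `i`-th block of the word `w`: its colored letters (positive value) preceded by
exactly `i` zero symbols. -/
def block (w : List (ℕ × ℕ)) (i : ℕ) : List (ℕ × ℕ) :=
  w.filter fun x => decide (1 ≤ x.1 ∧ zerosBefore w x = i)

/-- `π_i`: the `i`-th block of `w` with every letter shifted by `i`. -/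
def blockWord (r : ℕ) (w : List (ℕ × ℕ)) (i : ℕ) : List (ℕ × ℕ) :=
  (block w i).map (shiftLetter r i)

/-- `u ∈ CL(w)`: `u` is a shuffle of the shifted blocks `π_0, …, π_{r−1}` of `w`,
i.e. the letters of `u` are exactly those of `π_0, …, π_{r−1}` and each `π_i`
is a subsequence of `u`. -/
def IsColoredLinExt (r : ℕ) (w u : List (ℕ × ℕ)) : Prop :=
  (↑u : Multiset (ℕ × ℕ)) =
      ∑ i ∈ Finset.range r, (↑(blockWord r w i) : Multiset (ℕ × ℕ)) ∧
  ∀ i < r, (blockWord r w i).Sublist u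

open Classical in
/-- The (finite) set `L(P)` of linear extensions of `P`. -/
noncomputable def LinExts {r : ℕ} (P : ColoredPoset r) : Finset (List (ℕ × ℕ)) :=
  P.elems.toList.permutations.toFinset.filter (IsLinExt P)

open Classical in
/-- The (finite) set `CL(w)` of colored linear extensions of `w`. -/
noncomputable def ColLinExts (r : ℕ) (w : List (ℕ × ℕ)) : Finset (List (ℕ × ℕ)) :=
  (((List.range r).flatMap fun i => blockWord r w i).permutations.toFinset).filter
    (IsColoredLinExt r w)

/-- A colored `π`-partition of the word `u = u(0) ⋯ u(m−1)` with parts in `[0,j]_{(r)}`: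
a colored `P`-partition of the chain `u(0) ≺ ⋯ ≺ u(m−1) ≺ 0_1 ≺ ⋯ ≺ 0_{r−1}`
(the forced values `f(0_m) = (m,0)` of the zeros are built into the conditions). -/
def IsWordCPP (r j : ℕ) (u : List (ℕ × ℕ)) (f : Fin u.length → ℕ × ℕ) : Prop :=
  (∀ i, (f i).1 < r ∧ (f i).2 ≤ j) ∧
  (∀ i k : Fin u.length, i < k → partLE (f i) (f k)) ∧
  (∀ i k : Fin u.length, i < k → (f i).1 = (f k).1 →
      letterLT (shiftLetter r (f i).1 (u.get k)) (shiftLetter r (f i).1 (u.get i)) →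
      partLT (f i) (f k)) ∧
  (∀ i : Fin u.length, ∀ m, 1 ≤ m → m < r → partLE (f i) (m, 0)) ∧
  (∀ i : Fin u.length, ∀ m, 1 ≤ m → m < r → (f i).1 = m →
      letterLT (shiftLetter r m ((0 : ℕ), m)) (shiftLetter r m (u.get i)) →
      partLT (f i) (m, 0)) ∧
  (∀ i, (f i).2 = j → (u.get i).2 = (f i).1)

/-- `Ω_π(j)` for a word `π`: the number of colored `π`-partitions with parts in
`[0,j]_{(r)}`. -/
noncomputable def OmegaWord (r j : ℕ) (u : List (ℕ × ℕ)) : ℕ :=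
  Nat.card {f : Fin u.length → ℕ × ℕ // IsWordCPP r j u f}

/-- Weak lexicographic order on parts in `{0,…,r−1} × (ℕ ∪ {∞})`. -/
def partLEInf (a b : ℕ × ℕ∞) : Prop :=
  a.1 < b.1 ∨ (a.1 = b.1 ∧ a.2 ≤ b.2)

/-- Strict lexicographic order on parts in `{0,…,r−1} × (ℕ ∪ {∞})`. -/
def partLTInf (a b : ℕ × ℕ∞) : Prop :=
  a.1 < b.1 ∨ (a.1 = b.1 ∧ a.2 < b.2)

/-- A colored `P`-partition of the `r`-colored poset `P` with parts in
`X_{(r)} = {0,…,r−1} × (ℕ ∪ {∞})`. -/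
def IsCPPInf (r : ℕ) (P : ColoredPoset r) (f : {x // x ∈ P.elems} → ℕ × ℕ∞) : Prop :=
  (∀ x, (f x).1 < r) ∧
  (∀ m (h1 : 1 ≤ m) (h2 : m < r), f ⟨(0, m), P.zero_mem m h1 h2⟩ = (m, 0)) ∧
  (∀ x y, P.rel x.1 y.1 → partLEInf (f x) (f y)) ∧
  (∀ x y, P.rel x.1 y.1 → (f x).1 = (f y).1 →
      letterLT (shiftLetter r (f x).1 y.1) (shiftLetter r (f x).1 x.1) →
      partLTInf (f x) (f y)) ∧
  (∀ x, (f x).2 = ⊤ → x.1.2 = (f x).1)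

/-- A colored `π`-partition of the word `u` with parts in
`X_{(r)} = {0,…,r−1} × (ℕ ∪ {∞})`: a colored `P`-partition of the chain
`u(0) ≺ ⋯ ≺ u(m−1) ≺ 0_1 ≺ ⋯ ≺ 0_{r−1}`. -/
def IsWordCPPInf (r : ℕ) (u : List (ℕ × ℕ)) (f : Fin u.length → ℕ × ℕ∞) : Prop :=
  (∀ i, (f i).1 < r) ∧
  (∀ i k : Fin u.length, i < k → partLEInf (f i) (f k)) ∧
  (∀ i k : Fin u.length, i < k → (f i).1 = (f k).1 →
      letterLT (shiftLetter r (f i).1 (u.get k)) (shiftLetter r (f i).1 (u.get i)) →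
      partLTInf (f i) (f k)) ∧
  (∀ i : Fin u.length, ∀ m, 1 ≤ m → m < r → partLEInf (f i) (m, 0)) ∧
  (∀ i : Fin u.length, ∀ m, 1 ≤ m → m < r → (f i).1 = m →
      letterLT (shiftLetter r m ((0 : ℕ), m)) (shiftLetter r m (u.get i)) →
      partLTInf (f i) (m, 0)) ∧
  (∀ i, (f i).2 = ⊤ → (u.get i).2 = (f i).1)


/-!
A colored `P`-partition `f` ranks every element `x` of `P` by the key `(f x, x^{(k)})`, where `k` is
the block of `f x`; conditions (ii) and (iii) say exactly that this key increases strictly along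
`≺`. Sorting `P` by it gives a linear extension `w` in which the zero symbols, pinned at
`f(0_m) = (m, 0)`, cut `w` into blocks so that `x` lies in block `i` iff `f x ∈ X_i`. Sorting the
shifted letters `x^{(i)}` by `(value of f x, x^{(i)})` gives a shuffle `π ∈ CL(w)`, and recording
those values gives a `π`-partition; every `π`-partition has parts in `X_0`, because `π(k) ≺ 0_1`.
Conversely `(w, π, g)` glues to `f x = (i, g(x^{(i)}))` for `x` in block `i`. The glued `f`
recovers `w`, since `w` is sorted by the key of `f`, and recovers `(π, g)`, since `g` is
increasing along `π` with ties ordered by the letters.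
-/

open scoped Finset

namespace List

variable {α : Type*} {l w : List α} {x y : α}

section IdxOf

variable [BEq α] [LawfulBEq α]

theorem Nodup.pairwise_iff_idxOf_lt {R : α → α → Prop} (hl : l.Nodup) :
    l.Pairwise R ↔ ∀ x ∈ l, ∀ y ∈ l, l.idxOf x < l.idxOf y → R x y := by
  rw [pairwise_iff_getElem]
  refine ⟨fun h x hx y hy hxy => ?_, fun h i j hi hj hij => ?_⟩
  · simpa using h _ _ (idxOf_lt_length_iff.2 hx) (idxOf_lt_length_iff.2 hy) hxy
  · exact h _ (getElem_mem hi) _ (getElem_mem hj) (by rwa [hl.idxOf_getElem, hl.idxOf_getElem])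

theorem Pairwise.idxOf_lt_idxOf_iff {β : Type*} [Preorder β] {f : α → β}
    (hl : l.Pairwise (f · < f ·)) (hx : x ∈ l) (hy : y ∈ l) :
    l.idxOf x < l.idxOf y ↔ f x < f y := by
  have hnd : l.Nodup := hl.imp fun h => ne_of_apply_ne f h.ne
  refine ⟨hnd.pairwise_iff_idxOf_lt.1 hl x hx y hy, fun hxy => ?_⟩
  rcases lt_trichotomy (l.idxOf x) (l.idxOf y) with h | h | h
  · exact h
  · exact absurd ((idxOf_inj hx).1 h ▸ hxy) (lt_irrefl _)
  · exact absurd (hnd.pairwise_iff_idxOf_lt.1 hl y hy x hx h) hxy.not_gt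

theorem Sublist.idxOf_lt_idxOf_iff (h : l <+ w) (hw : w.Nodup) (hx : x ∈ l) (hy : y ∈ l) :
    l.idxOf x < l.idxOf y ↔ w.idxOf x < w.idxOf y :=
  ((hw.pairwise_iff_idxOf_lt.2 fun _ _ _ _ h => h).sublist h).idxOf_lt_idxOf_iff hx hy

theorem idxOf_map_of_nodup {β : Type*} [BEq β] [LawfulBEq β] {f : α → β}
    (hl : (l.map f).Nodup) (hx : x ∈ l) : (l.map f).idxOf (f x) = l.idxOf x := by
  have hi : l.idxOf x < (l.map f).length := by simpa using idxOf_lt_length_iff.2 hx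
  simpa using hl.idxOf_getElem _ hi

end IdxOf

theorem pairwise_lt_insertionSort {β : Type*} [LinearOrder β] {f : α → β} (hl : l.Nodup)
    (hf : ∀ a ∈ l, ∀ b ∈ l, f a = f b → a = b) :
    (l.insertionSort (f · ≤ f ·)).Pairwise (f · < f ·) := by
  have : Std.Total (f · ≤ f ·) := ⟨fun a b => le_total (f a) (f b)⟩
  have : IsTrans α (f · ≤ f ·) := ⟨fun _ _ _ => le_trans⟩
  have hperm := perm_insertionSort (f · ≤ f ·) l
  refine ((pairwise_insertionSort _ l).and (hperm.nodup_iff.2 hl)).imp_of_mem ?_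
  intro a b ha hb hab
  exact hab.1.lt_of_ne fun h => hab.2 (hf a (hperm.mem_iff.1 ha) b (hperm.mem_iff.1 hb) h)

theorem sum_range_filter_eq {κ : α → ℕ} {R : ℕ} (h : ∀ x ∈ l, κ x < R) :
    ∑ i ∈ Finset.range R, ((l.filter (κ · = i) : List α) : Multiset α) = l := by
  induction l with
  | nil => simp
  | cons a t ih =>
    have hcons : ∀ i, ((a :: t).filter (κ · = i) : Multiset α) =
        (if κ a = i then {a} else 0) + (t.filter (κ · = i) : Multiset α) := by
      intro i
      by_cases hai : κ a = i <;> simp [hai]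
    rw [Finset.sum_congr rfl fun i _ => hcons i, Finset.sum_add_distrib,
      ih fun x hx => h x (mem_cons_of_mem _ hx), Finset.sum_ite_eq,
      if_pos (Finset.mem_range.2 (h a mem_cons_self))]
    simp

end List

def letterKey (x : ℕ × ℕ) : ℕ ×ₗ ℕ := toLex (x.2, x.1)

lemma letterKey_lt_letterKey {x y : ℕ × ℕ} : letterKey x < letterKey y ↔ letterLT x y :=
  Prod.Lex.toLex_lt_toLex

lemma letterKey_injective : Function.Injective letterKey := by
  intro x y h
  simp only [letterKey, toLex_inj, Prod.ext_iff] at h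
  exact Prod.ext h.2 h.1

lemma not_letterLT_iff {x y : ℕ × ℕ} (hne : x ≠ y) : ¬ letterLT y x ↔ letterLT x y := by
  rw [← letterKey_lt_letterKey, ← letterKey_lt_letterKey, not_lt,
    le_iff_lt_or_eq, or_iff_left (letterKey_injective.ne hne)]

lemma letterLT_zero_zero {y : ℕ × ℕ} (hy : 1 ≤ y.1) : letterLT (0, 0) y := by
  unfold letterLT; omega

@[simp] lemma shiftLetter_fst (r k : ℕ) (x : ℕ × ℕ) : (shiftLetter r k x).1 = x.1 := rfl

lemma shiftLetter_snd_lt {r : ℕ} (k : ℕ) {x : ℕ × ℕ} (hx : x.2 < r) :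
    (shiftLetter r k x).2 < r :=
  Nat.mod_lt _ (by omega)

lemma shiftLetter_zero {r : ℕ} {x : ℕ × ℕ} (hx : x.2 < r) : shiftLetter r 0 x = x := by
  simp [shiftLetter, Nat.mod_eq_of_lt hx]

lemma eq_of_shiftLetter_eq {r k : ℕ} {x y : ℕ × ℕ} (hx : x.2 < r) (hy : y.2 < r)
    (h : shiftLetter r k x = shiftLetter r k y) : x = y := by
  simp only [shiftLetter, Prod.ext_iff] at h
  have hk : k % r ≤ r := (Nat.mod_lt _ (by omega)).le
  have hmod : x.2 + (r - k % r) ≡ y.2 + (r - k % r) [MOD r] := by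
    rw [← Nat.add_sub_assoc hk, ← Nat.add_sub_assoc hk]; exact h.2
  exact Prod.ext h.1 (Nat.ModEq.eq_of_lt_of_lt (Nat.ModEq.add_right_cancel' _ hmod) hx hy)

lemma shiftLetter_snd_eq_zero_iff {r k : ℕ} (hk : k < r) {x : ℕ × ℕ} (hx : x.2 < r) :
    (shiftLetter r k x).2 = 0 ↔ x.2 = k := by
  have hself : shiftLetter r k (x.1, k) = (x.1, 0) := by
    simp [shiftLetter, Nat.mod_eq_of_lt hk]
  refine ⟨fun h => ?_, fun h => ?_⟩
  · exact congrArg Prod.snd (eq_of_shiftLetter_eq (k := k) hx hk (hself ▸ Prod.ext rfl h :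
      shiftLetter r k x = shiftLetter r k (x.1, k)))
  · rw [show x = (x.1, k) from Prod.ext rfl h, hself]

section LinExt

variable {r : ℕ} {P : ColoredPoset r} {w : List (ℕ × ℕ)} {x y : ℕ × ℕ}

lemma zero_symbol_of_fst_eq_zero {x : {x // x ∈ P.elems}} (hx : x.1.1 = 0) :
    x.1 = ((0 : ℕ), x.1.2) ∧ 1 ≤ x.1.2 ∧ x.1.2 < r :=
  ⟨Prod.ext hx rfl, P.zero_only _ x.2 hx⟩

lemma zerosBefore_mono (h : w.idxOf x ≤ w.idxOf y) : zerosBefore w x ≤ zerosBefore w y :=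
  ((List.take_sublist_take_left h).filter _).length_le

namespace IsLinExt

variable (hw : IsLinExt P w)
include hw

lemma mem_iff : x ∈ w ↔ x ∈ P.elems := hw.2.1 x

lemma zero_mem_iff {m : ℕ} : ((0 : ℕ), m) ∈ w ↔ 1 ≤ m ∧ m < r :=
  hw.mem_iff.trans ⟨fun h => P.zero_only _ h rfl, fun h => P.zero_mem m h.1 h.2⟩

lemma zero_idxOf_lt_zero_iff {j m : ℕ} (hj : 1 ≤ j) (hjr : j < r) (hm : 1 ≤ m) (hmr : m < r) :
    w.idxOf ((0 : ℕ), j) < w.idxOf ((0 : ℕ), m) ↔ j < m := by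
  have hlt : ∀ {a b}, 1 ≤ a → a < b → b < r → w.idxOf ((0 : ℕ), a) < w.idxOf ((0 : ℕ), b) :=
    fun ha hab hb => hw.2.2 _ (P.zero_mem _ ha (by omega)) _ (P.zero_mem _ (by omega) hb)
      (P.zero_chain _ _ ha hab.le hb) (by simp; omega)
  refine ⟨fun h => ?_, fun h => hlt hj h hmr⟩
  by_contra hge
  rcases (not_lt.1 hge).eq_or_lt with rfl | hmj
  · exact lt_irrefl _ h
  · exact lt_asymm h (hlt hm hmj hjr)

lemma zerosBefore_eq_card :
    zerosBefore w x = #{m ∈ Finset.Ico 1 r | w.idxOf ((0 : ℕ), m) < w.idxOf x} := by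
  have hnd : ((w.take (w.idxOf x)).filter fun z => z.1 = 0).Nodup :=
    (hw.1.sublist (List.take_sublist _ _)).filter _
  have hset : ((w.take (w.idxOf x)).filter fun z => z.1 = 0).toFinset =
      {m ∈ Finset.Ico 1 r | w.idxOf ((0 : ℕ), m) < w.idxOf x}.map
        ⟨fun m => ((0 : ℕ), m), fun a b h => by simpa using h⟩ := by
    ext ⟨a, m⟩
    simp only [List.mem_toFinset, List.mem_filter, Finset.mem_map, Finset.mem_filter,
      Finset.mem_Ico, decide_eq_true_eq]
    constructor
    · rintro ⟨hmem, rfl⟩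
      have hzw := List.mem_of_mem_take hmem
      exact ⟨m, ⟨hw.zero_mem_iff.1 hzw, (List.mem_take_iff_idxOf_lt hzw).1 hmem⟩, rfl⟩
    · rintro ⟨m, ⟨hm, hlt⟩, h⟩
      obtain ⟨rfl, rfl⟩ := Prod.mk.inj h
      exact ⟨(List.mem_take_iff_idxOf_lt (hw.zero_mem_iff.2 hm)).2 hlt, rfl⟩
  rw [zerosBefore, ← List.toFinset_card_of_nodup hnd, hset, Finset.card_map]

lemma zero_before_iff {m : ℕ} (hm : 1 ≤ m) (hmr : m < r) :
    w.idxOf ((0 : ℕ), m) < w.idxOf x ↔ m ≤ zerosBefore w x := by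
  rw [hw.zerosBefore_eq_card]
  constructor
  · intro h
    calc m = #(Finset.Ico 1 (m + 1)) := by simp
      _ ≤ _ := Finset.card_le_card fun j hj => by
        simp only [Finset.mem_Ico, Finset.mem_filter] at hj ⊢
        refine ⟨⟨hj.1, by omega⟩, ?_⟩
        rcases (Nat.lt_succ_iff.1 hj.2).eq_or_lt with rfl | hjm
        · exact h
        · exact ((hw.zero_idxOf_lt_zero_iff hj.1 (by omega) hm hmr).2 hjm).trans h
  · intro h
    by_contra hnot
    have hsub : {j ∈ Finset.Ico 1 r | w.idxOf ((0 : ℕ), j) < w.idxOf x} ⊆ Finset.Ico 1 m := by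
      intro j hj
      simp only [Finset.mem_Ico, Finset.mem_filter] at hj ⊢
      refine ⟨hj.1.1, Nat.lt_of_not_le fun hmj => hnot ?_⟩
      rcases hmj.eq_or_lt with rfl | hmj
      · exact hj.2
      · exact ((hw.zero_idxOf_lt_zero_iff hm hmr hj.1.1 hj.1.2).2 hmj).trans hj.2
    have := Finset.card_le_card hsub
    simp only [Nat.card_Ico] at this
    omega

lemma zerosBefore_lt (hx : x ∈ w) : zerosBefore w x < r := by
  have hr : x.2 < r := P.col_lt x (hw.mem_iff.1 hx)
  rw [hw.zerosBefore_eq_card]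
  exact (Finset.card_filter_le _ _).trans_lt (by simp; omega)

end IsLinExt

end LinExt

section ColoredLinExt

variable {r : ℕ} {P : ColoredPoset r} {w u : List (ℕ × ℕ)} {x y : ℕ × ℕ} {i : ℕ}

lemma mem_block : x ∈ block w i ↔ x ∈ w ∧ 1 ≤ x.1 ∧ zerosBefore w x = i := by
  simp [block]

namespace IsColoredLinExt

variable (hu : IsColoredLinExt r w u)
include hu

lemma mem_iff : y ∈ u ↔ ∃ i < r, y ∈ blockWord r w i := by
  rw [← Multiset.mem_coe, hu.1, Multiset.mem_sum]
  simp

lemma one_le_fst_and_snd_lt (hy : y ∈ u) : 1 ≤ y.1 ∧ y.2 < r := by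
  obtain ⟨i, hi, hy⟩ := hu.mem_iff.1 hy
  obtain ⟨x, hx, rfl⟩ := List.mem_map.1 hy
  exact ⟨(mem_block.1 hx).2.1, Nat.mod_lt _ (by omega)⟩

variable (hw : IsLinExt P w)
include hw

lemma map_fst_perm :
    (u.map Prod.fst).Perm ((w.filter fun x => 1 ≤ x.1).map Prod.fst) := by
  have hblocks : ∑ i ∈ Finset.range r, ((block w i : List (ℕ × ℕ)) : Multiset (ℕ × ℕ)) =
      (w.filter fun x => 1 ≤ x.1 : List (ℕ × ℕ)) := by
    rw [← List.sum_range_filter_eq (κ := zerosBefore w) (R := r)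
      fun x hx => hw.zerosBefore_lt (List.mem_of_mem_filter hx)]
    refine Finset.sum_congr rfl fun i _ => ?_
    rw [block, List.filter_filter]
    exact congrArg _ (List.filter_congr fun x _ => by simp [and_comm])
  rw [← Multiset.coe_eq_coe, ← Multiset.map_coe, ← Multiset.map_coe, hu.1, ← hblocks,
    ← Multiset.coe_mapAddMonoidHom, map_sum, map_sum]
  refine Finset.sum_congr rfl fun i _ => ?_
  simp [blockWord, Function.comp_def]

lemma nodup : u.Nodup := by
  refine (hu.map_fst_perm hw).nodup_iff.2 ?_ |>.of_map
  refine (hw.1.filter _).map_on fun x hx y hy hxy => ?_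
  simp only [List.mem_filter, decide_eq_true_eq] at hx hy
  exact P.val_inj x (hw.mem_iff.1 hx.1) y (hw.mem_iff.1 hy.1) hx.2 hxy

lemma shift_mem (hx : x ∈ w) (hx1 : 1 ≤ x.1) : shiftLetter r (zerosBefore w x) x ∈ u :=
  hu.mem_iff.2 ⟨_, hw.zerosBefore_lt hx, List.mem_map.2 ⟨x, mem_block.2 ⟨hx, hx1, rfl⟩, rfl⟩⟩

lemma idxOf_shift_lt_idxOf_shift (hx : x ∈ block w i) (hy : y ∈ block w i)
    (hxy : w.idxOf x < w.idxOf y) :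
    u.idxOf (shiftLetter r i x) < u.idxOf (shiftLetter r i y) := by
  have hblock : (block w i).Sublist w := List.filter_sublist
  have hword : (blockWord r w i).Sublist u :=
    hu.2 i ((mem_block.1 hx).2.2 ▸ hw.zerosBefore_lt (mem_block.1 hx).1)
  have hnd : (blockWord r w i).Nodup := hword.nodup (hu.nodup hw)
  rw [← hword.idxOf_lt_idxOf_iff (hu.nodup hw) (List.mem_map_of_mem hx)
    (List.mem_map_of_mem hy), blockWord, List.idxOf_map_of_nodup hnd hx,
    List.idxOf_map_of_nodup hnd hy, hblock.idxOf_lt_idxOf_iff hw.1 hx hy]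
  exact hxy

end IsColoredLinExt

end ColoredLinExt

def pairKey (z : (ℕ × ℕ) × ℕ∞) : ℕ∞ ×ₗ (ℕ ×ₗ ℕ) := toLex (z.2, letterKey z.1)

namespace IsWordCPPInf

variable {r : ℕ} {u : List (ℕ × ℕ)} {g : Fin u.length → ℕ × ℕ∞}

/-- `g(π(k)) ≤ f(0_1) = (1, 0)`, strictly by (iii) since `0_1^{(1)} = (0, 0)` is below every
letter. -/
lemma fst_eq_zero (hg : IsWordCPPInf r u g) (hu : ∀ y ∈ u, 1 ≤ y.1) (p : Fin u.length) :
    (g p).1 = 0 := by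
  rcases Nat.lt_or_ge 1 r with hr | hr
  · have hzero : shiftLetter r 1 ((0 : ℕ), 1) = (0, 0) := by
      simp [shiftLetter, Nat.mod_eq_of_lt hr]
    rcases hg.2.2.2.1 p 1 le_rfl hr with h | ⟨h, -⟩
    · omega
    · have := hg.2.2.2.2.1 p 1 le_rfl hr h
        (hzero ▸ letterLT_zero_zero (hu (u.get p) (List.get_mem u p)))
      simpa [partLTInf] using this
  · have := hg.1 p
    omega

lemma pairKey_strictMono (hg : IsWordCPPInf r u g) (hnd : u.Nodup)
    (hu : ∀ y ∈ u, 1 ≤ y.1 ∧ y.2 < r) :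
    StrictMono fun p => pairKey (u.get p, (g p).2) := by
  intro p q hpq
  have hfst := hg.fst_eq_zero fun y hy => (hu y hy).1
  have hne : u.get p ≠ u.get q := fun h => hpq.ne (hnd.get_inj_iff.1 h)
  simp only [pairKey]
  rw [Prod.Lex.toLex_lt_toLex, letterKey_lt_letterKey, ← not_letterLT_iff hne]
  have hle := hg.2.1 p q hpq
  have hstrict := hg.2.2.1 p q hpq (by rw [hfst, hfst])
  simp only [partLEInf, partLTInf, hfst, shiftLetter_zero (hu _ (List.get_mem _ _)).2,
    lt_irrefl, true_and, false_or] at hle hstrict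
  by_cases hlt : letterLT (u.get q) (u.get p)
  · exact Or.inl (hstrict hlt)
  · exact hle.lt_or_eq.imp_right fun h => ⟨h, hlt⟩

end IsWordCPPInf

section PartKey

variable {r : ℕ}

def partKey (r : ℕ) (x : ℕ × ℕ) (a : ℕ × ℕ∞) : ℕ ×ₗ (ℕ∞ ×ₗ (ℕ ×ₗ ℕ)) :=
  toLex (a.1, pairKey (shiftLetter r a.1 x, a.2))

lemma partKey_lt_partKey {x y : ℕ × ℕ} {a b : ℕ × ℕ∞} :
    partKey r x a < partKey r y b ↔ a.1 < b.1 ∨ a.1 = b.1 ∧ (a.2 < b.2 ∨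
      a.2 = b.2 ∧ letterLT (shiftLetter r a.1 x) (shiftLetter r b.1 y)) := by
  simp only [partKey, pairKey, Prod.Lex.toLex_lt_toLex, letterKey_lt_letterKey]

lemma partKey_lt_partKey_iff {x y : ℕ × ℕ} {a b : ℕ × ℕ∞}
    (hne : shiftLetter r a.1 x ≠ shiftLetter r a.1 y) :
    partKey r x a < partKey r y b ↔ partLEInf a b ∧
      (a.1 = b.1 → letterLT (shiftLetter r a.1 y) (shiftLetter r a.1 x) → partLTInf a b) := by
  rw [partKey_lt_partKey]
  unfold partLEInf partLTInf
  rcases lt_trichotomy a.1 b.1 with h | h | h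
  · simp [h, h.ne]
  · rw [← h, ← not_letterLT_iff hne]
    by_cases hl : letterLT (shiftLetter r a.1 y) (shiftLetter r a.1 x) <;>
      simp [hl, le_iff_lt_or_eq, imp_or]
  · simp [h.not_gt, h.ne']

variable {P : ColoredPoset r}

def sortKey (F : {x // x ∈ P.elems} → ℕ × ℕ∞) (x : {x // x ∈ P.elems}) :
    ℕ ×ₗ (ℕ∞ ×ₗ (ℕ ×ₗ ℕ)) :=
  partKey r x.1 (F x)

lemma sortKey_injective (F : {x // x ∈ P.elems} → ℕ × ℕ∞) : Function.Injective (sortKey F) := by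
  intro x y h
  simp only [sortKey, partKey, pairKey, toLex_inj, Prod.ext_iff] at h
  exact Subtype.ext (eq_of_shiftLetter_eq (P.col_lt _ x.2) (P.col_lt _ y.2)
    (letterKey_injective (h.2.2.trans (by rw [h.1]))))

lemma isCPPInf_iff {F : {x // x ∈ P.elems} → ℕ × ℕ∞} :
    IsCPPInf r P F ↔ (∀ x, (F x).1 < r) ∧
      (∀ m (h1 : 1 ≤ m) (h2 : m < r), F ⟨(0, m), P.zero_mem m h1 h2⟩ = (m, 0)) ∧
      (∀ x y, P.rel x.1 y.1 → x ≠ y → sortKey F x < sortKey F y) ∧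
      (∀ x, (F x).2 = ⊤ → x.1.2 = (F x).1) := by
  have key : ∀ x y, (partLEInf (F x) (F y) ∧ ((F x).1 = (F y).1 →
      letterLT (shiftLetter r (F x).1 y.1) (shiftLetter r (F x).1 x.1) →
        partLTInf (F x) (F y))) ↔ (x ≠ y → sortKey F x < sortKey F y) := by
    intro x y
    by_cases hxy : x = y
    · subst hxy
      simp [partLEInf, letterLT]
    · rw [sortKey, sortKey, partKey_lt_partKey_iff fun h =>
        hxy (Subtype.ext (eq_of_shiftLetter_eq (P.col_lt _ x.2) (P.col_lt _ y.2) h))]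
      simp [hxy]
  refine ⟨fun ⟨h1, h2, h3, h4, h5⟩ =>
      ⟨h1, h2, fun x y hr => (key x y).1 ⟨h3 x y hr, h4 x y hr⟩, h5⟩,
    fun ⟨h1, h2, h3, h5⟩ => ⟨h1, h2, fun x y hr => ((key x y).2 (h3 x y hr)).1,
      fun x y hr => ((key x y).2 (h3 x y hr)).2, h5⟩⟩

lemma IsCPPInf.apply_of_zero {F : {x // x ∈ P.elems} → ℕ × ℕ∞}
    (hF : IsCPPInf r P F) {x : {x // x ∈ P.elems}} (hx : x.1.1 = 0) : F x = (x.1.2, 0) := by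
  obtain ⟨hx0, hm, hmr⟩ := zero_symbol_of_fst_eq_zero hx
  rw [show x = ⟨((0 : ℕ), x.1.2), P.zero_mem _ hm hmr⟩ from Subtype.ext hx0]
  exact hF.2.1 _ hm hmr

end PartKey

section OfWordPartition

variable {r : ℕ} {P : ColoredPoset r} {w u : List (ℕ × ℕ)}
  (hw : IsLinExt P w) (hu : IsColoredLinExt r w u) (g : Fin u.length → ℕ × ℕ∞)

def shiftPos (x : {x // x ∈ P.elems}) (hx : x.1.1 ≠ 0) : Fin u.length :=
  ⟨u.idxOf (shiftLetter r (zerosBefore w x.1) x.1), List.idxOf_lt_length_iff.2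
    (hu.shift_mem hw (hw.mem_iff.2 x.2) (Nat.one_le_iff_ne_zero.2 hx))⟩

def ofWordPartition (x : {x // x ∈ P.elems}) : ℕ × ℕ∞ :=
  if h : x.1.1 = 0 then (x.1.2, 0) else (zerosBefore w x.1, (g (shiftPos hw hu x h)).2)

variable {hw hu g}

lemma get_shiftPos {x : {x // x ∈ P.elems}} (hx : x.1.1 ≠ 0) :
    u.get (shiftPos hw hu x hx) = shiftLetter r (zerosBefore w x.1) x.1 :=
  List.idxOf_get _

lemma shiftPos_eq_of_get_eq {x : {x // x ∈ P.elems}} (hx : x.1.1 ≠ 0) {p : Fin u.length}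
    (hp : u.get p = shiftLetter r (zerosBefore w x.1) x.1) : shiftPos hw hu x hx = p :=
  Fin.ext ((congrArg (List.idxOf · u) hp.symm).trans (List.get_idxOf (hu.nodup hw) p))

lemma ofWordPartition_of_zero {x : {x // x ∈ P.elems}} (hx : x.1.1 = 0) :
    ofWordPartition hw hu g x = (x.1.2, 0) :=
  dif_pos hx

lemma ofWordPartition_of_ne_zero {x : {x // x ∈ P.elems}} (hx : x.1.1 ≠ 0) :
    ofWordPartition hw hu g x = (zerosBefore w x.1, (g (shiftPos hw hu x hx)).2) :=
  dif_neg hx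

lemma sortKey_ofWordPartition_lt_of_zero {x y : {x // x ∈ P.elems}} (hx : x.1.1 = 0)
    (hy : y.1.1 ≠ 0) (hxy : w.idxOf x.1 < w.idxOf y.1) :
    sortKey (ofWordPartition hw hu g) x < sortKey (ofWordPartition hw hu g) y := by
  obtain ⟨hx0, hm, hmr⟩ := zero_symbol_of_fst_eq_zero hx
  have hle := (hw.zero_before_iff hm hmr).1 (hx0 ▸ hxy)
  rw [sortKey, sortKey, partKey_lt_partKey, ofWordPartition_of_zero hx,
    ofWordPartition_of_ne_zero hy]
  dsimp only
  refine hle.lt_or_eq.imp_right fun h =>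
    ⟨h, (show (0 : ℕ∞) ≤ _ from zero_le).lt_or_eq.imp_right fun h0 => ⟨h0, ?_⟩⟩
  have hshift : shiftLetter r x.1.2 x.1 = (0, 0) :=
    Prod.ext hx ((shiftLetter_snd_eq_zero_iff hmr hmr).2 rfl)
  exact hshift ▸ letterLT_zero_zero (Nat.one_le_iff_ne_zero.2 hy)

lemma sortKey_ofWordPartition_lt_of_letters (hg : IsWordCPPInf r u g)
    {x y : {x // x ∈ P.elems}} (hx : x.1.1 ≠ 0) (hy : y.1.1 ≠ 0)
    (hxy : w.idxOf x.1 < w.idxOf y.1) :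
    sortKey (ofWordPartition hw hu g) x < sortKey (ofWordPartition hw hu g) y := by
  rw [sortKey, sortKey, partKey_lt_partKey, ofWordPartition_of_ne_zero hx,
    ofWordPartition_of_ne_zero hy]
  dsimp only
  refine (zerosBefore_mono hxy.le).lt_or_eq.imp_right fun hzb => ⟨hzb, ?_⟩
  have hpos : shiftPos hw hu x hx < shiftPos hw hu y hy := by
    refine Fin.mk_lt_mk.2 (hzb ▸ hu.idxOf_shift_lt_idxOf_shift hw ?_ ?_ hxy)
    · exact mem_block.2 ⟨hw.mem_iff.2 x.2, Nat.one_le_iff_ne_zero.2 hx, rfl⟩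
    · exact mem_block.2 ⟨hw.mem_iff.2 y.2, Nat.one_le_iff_ne_zero.2 hy, hzb.symm⟩
  have := hg.pairKey_strictMono (hu.nodup hw) (fun _ => hu.one_le_fst_and_snd_lt) hpos
  simpa only [pairKey, Prod.Lex.toLex_lt_toLex, letterKey_lt_letterKey, get_shiftPos] using this

lemma sortKey_ofWordPartition_lt (hg : IsWordCPPInf r u g) {x y : {x // x ∈ P.elems}}
    (hxy : w.idxOf x.1 < w.idxOf y.1) :
    sortKey (ofWordPartition hw hu g) x < sortKey (ofWordPartition hw hu g) y := by
  by_cases hy : y.1.1 = 0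
  · obtain ⟨hy0, hm, hmr⟩ := zero_symbol_of_fst_eq_zero hy
    rw [sortKey, sortKey, partKey_lt_partKey, ofWordPartition_of_zero hy]
    left
    by_cases hx : x.1.1 = 0
    · obtain ⟨hx0, hj, hjr⟩ := zero_symbol_of_fst_eq_zero hx
      rw [ofWordPartition_of_zero hx]
      exact (hw.zero_idxOf_lt_zero_iff hj hjr hm hmr).1 (hx0 ▸ hy0 ▸ hxy)
    · rw [ofWordPartition_of_ne_zero hx]
      exact Nat.lt_of_not_le fun h => hxy.not_gt (hy0 ▸ (hw.zero_before_iff hm hmr).2 h)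
  · by_cases hx : x.1.1 = 0
    · exact sortKey_ofWordPartition_lt_of_zero hx hy hxy
    · exact sortKey_ofWordPartition_lt_of_letters hg hx hy hxy

lemma isCPPInf_ofWordPartition (hg : IsWordCPPInf r u g) :
    IsCPPInf r P (ofWordPartition hw hu g) := by
  refine isCPPInf_iff.2 ⟨fun x => ?_, fun m _ _ => ofWordPartition_of_zero rfl,
    fun x y hrel hne => sortKey_ofWordPartition_lt hg (hw.2.2 _ x.2 _ y.2 hrel
      (Subtype.coe_injective.ne hne)), fun x htop => ?_⟩
  · by_cases hx : x.1.1 = 0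
    · rw [ofWordPartition_of_zero hx]; exact (zero_symbol_of_fst_eq_zero hx).2.2
    · rw [ofWordPartition_of_ne_zero hx]; exact hw.zerosBefore_lt (hw.mem_iff.2 x.2)
  · by_cases hx : x.1.1 = 0
    · simp [ofWordPartition_of_zero hx] at htop
    rw [ofWordPartition_of_ne_zero hx] at htop ⊢
    have := hg.2.2.2.2.2 _ htop
    rwa [get_shiftPos, hg.fst_eq_zero (fun _ hy => (hu.one_le_fst_and_snd_lt hy).1),
      shiftLetter_snd_eq_zero_iff (hw.zerosBefore_lt (hw.mem_iff.2 x.2)) (P.col_lt _ x.2)] at this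

end OfWordPartition

section ToWordPartition

variable {r : ℕ} {P : ColoredPoset r} (F : {x // x ∈ P.elems} → ℕ × ℕ∞)

noncomputable def sortedElems : List {x // x ∈ P.elems} :=
  P.elems.attach.toList.insertionSort (sortKey F · ≤ sortKey F ·)

noncomputable def linExtOf : List (ℕ × ℕ) := (sortedElems F).map Subtype.val

def valueKey (x : {x // x ∈ P.elems}) : ℕ∞ ×ₗ (ℕ ×ₗ ℕ) :=
  pairKey (shiftLetter r (F x).1 x.1, (F x).2)

noncomputable def sortedLetters : List {x // x ∈ P.elems} :=
  (P.elems.attach.toList.filter fun x => 1 ≤ x.1.1).insertionSort (valueKey F · ≤ valueKey F ·)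

noncomputable def coloredWordOf : List (ℕ × ℕ) :=
  (sortedLetters F).map fun x => shiftLetter r (F x).1 x.1

lemma length_coloredWordOf : (coloredWordOf F).length = (sortedLetters F).length :=
  List.length_map _

noncomputable def letterAt (p : Fin (coloredWordOf F).length) : {x // x ∈ P.elems} :=
  (sortedLetters F)[p.1]'(length_coloredWordOf F ▸ p.2)

noncomputable def wordPartitionOf (p : Fin (coloredWordOf F).length) : ℕ × ℕ∞ :=
  (0, (F (letterAt F p)).2)

variable {F}

lemma mem_sortedElems (x : {x // x ∈ P.elems}) : x ∈ sortedElems F := by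
  simp [sortedElems, (List.perm_insertionSort _ _).mem_iff]

lemma pairwise_sortedElems : (sortedElems F).Pairwise (sortKey F · < sortKey F ·) :=
  List.pairwise_lt_insertionSort (Finset.nodup_toList _)
    fun _ _ _ _ h => sortKey_injective F h

lemma nodup_sortedElems : (sortedElems F).Nodup :=
  pairwise_sortedElems.imp fun h => ne_of_apply_ne (sortKey F) h.ne

lemma nodup_linExtOf : (linExtOf F).Nodup :=
  nodup_sortedElems.map Subtype.val_injective

lemma mem_sortedLetters {x : {x // x ∈ P.elems}} : x ∈ sortedLetters F ↔ 1 ≤ x.1.1 := by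
  simp [sortedLetters, (List.perm_insertionSort _ _).mem_iff]

lemma valueKey_injOn_letters {x y : {x // x ∈ P.elems}} (hx : 1 ≤ x.1.1)
    (h : valueKey F x = valueKey F y) : x = y := by
  simp only [valueKey, pairKey, toLex_inj, Prod.ext_iff] at h
  have hval := congrArg Prod.fst (letterKey_injective h.2)
  exact Subtype.ext (P.val_inj _ x.2 _ y.2 hx hval)

lemma pairwise_sortedLetters : (sortedLetters F).Pairwise (valueKey F · < valueKey F ·) :=
  List.pairwise_lt_insertionSort ((Finset.nodup_toList _).filter _) fun x hx _ _ h =>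
    valueKey_injOn_letters (by simpa using (List.mem_filter.1 hx).2) h

lemma nodup_sortedLetters : (sortedLetters F).Nodup :=
  pairwise_sortedLetters.imp fun h => ne_of_apply_ne (valueKey F) h.ne

lemma idxOf_linExtOf_lt_iff {x y : {x // x ∈ P.elems}} :
    (linExtOf F).idxOf x.1 < (linExtOf F).idxOf y.1 ↔ sortKey F x < sortKey F y := by
  rw [linExtOf, List.idxOf_map_of_nodup nodup_linExtOf (mem_sortedElems x),
    List.idxOf_map_of_nodup nodup_linExtOf (mem_sortedElems y)]
  exact pairwise_sortedElems.idxOf_lt_idxOf_iff (mem_sortedElems x) (mem_sortedElems y)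

lemma isLinExt_linExtOf (hF : IsCPPInf r P F) : IsLinExt P (linExtOf F) := by
  refine ⟨nodup_linExtOf,
    fun x => ⟨fun hx => ?_, fun hx => List.mem_map.2 ⟨⟨x, hx⟩, mem_sortedElems _, rfl⟩⟩,
    fun x hx y hy hrel hne => ?_⟩
  · obtain ⟨x, -, rfl⟩ := List.mem_map.1 hx
    exact x.2
  · exact idxOf_linExtOf_lt_iff (x := ⟨x, hx⟩) (y := ⟨y, hy⟩) |>.2 <|
      (isCPPInf_iff.1 hF).2.2.1 ⟨x, hx⟩ ⟨y, hy⟩ hrel (by simpa using hne)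

lemma zerosBefore_linExtOf (hF : IsCPPInf r P F) {x : {x // x ∈ P.elems}} (hx : x.1.1 ≠ 0) :
    zerosBefore (linExtOf F) x.1 = (F x).1 := by
  have hw := isLinExt_linExtOf hF
  have hFx := (isCPPInf_iff.1 hF).1 x
  have hle : ∀ m, 1 ≤ m → m < r → (m ≤ zerosBefore (linExtOf F) x.1 ↔ m ≤ (F x).1) := by
    intro m hm hmr
    rw [← hw.zero_before_iff hm hmr, idxOf_linExtOf_lt_iff (x := ⟨_, P.zero_mem m hm hmr⟩),
      sortKey, sortKey, partKey_lt_partKey, hF.2.1 m hm hmr]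
    have hshift : shiftLetter r m ((0 : ℕ), m) = (0, 0) :=
      Prod.ext rfl ((shiftLetter_snd_eq_zero_iff hmr hmr).2 rfl)
    dsimp only
    rw [hshift]
    have hinner : (0 : ℕ∞) < (F x).2 ∨ 0 = (F x).2 ∧ letterLT (0, 0) (shiftLetter r (F x).1 x.1) :=
      (show (0 : ℕ∞) ≤ _ from zero_le).lt_or_eq.imp_right
        fun h => ⟨h, letterLT_zero_zero (Nat.one_le_iff_ne_zero.2 hx)⟩
    simp only [hinner, and_true]
    omega
  have hzb := hw.zerosBefore_lt (hw.mem_iff.2 x.2)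
  by_contra hne
  rcases Nat.lt_or_gt_of_ne hne with h | h
  · exact absurd ((hle _ (by omega) hFx).2 le_rfl) (by omega)
  · exact absurd ((hle _ (by omega) hzb).1 le_rfl) (by omega)

lemma get_coloredWordOf (p : Fin (coloredWordOf F).length) :
    (coloredWordOf F).get p = shiftLetter r (F (letterAt F p)).1 (letterAt F p).1 :=
  List.getElem_map _

lemma valueKey_letterAt_lt {p q : Fin (coloredWordOf F).length} (hpq : p < q) :
    valueKey F (letterAt F p) < valueKey F (letterAt F q) :=
  List.pairwise_iff_getElem.1 pairwise_sortedLetters _ _ _ _ hpq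

lemma filter_sortedElems_eq (i : ℕ) :
    (sortedElems F).filter (fun x => 1 ≤ x.1.1 ∧ (F x).1 = i) =
      (sortedLetters F).filter fun x => (F x).1 = i := by
  refine List.Perm.eq_of_pairwise (le := (valueKey F · < valueKey F ·))
    (fun _ _ _ _ h h' => (lt_asymm h h').elim) ?_ (pairwise_sortedLetters.filter _) ?_
  · refine (pairwise_sortedElems.filter _).imp_of_mem fun ha hb h => ?_
    simp only [List.mem_filter, decide_eq_true_eq] at ha hb
    simpa [sortKey, partKey, valueKey, Prod.Lex.toLex_lt_toLex, ha.2.2, hb.2.2] using h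
  · rw [List.perm_ext_iff_of_nodup (nodup_sortedElems.filter _) (nodup_sortedLetters.filter _)]
    simp [mem_sortedElems, mem_sortedLetters]

lemma block_linExtOf (hF : IsCPPInf r P F) (i : ℕ) :
    block (linExtOf F) i =
      ((sortedElems F).filter fun x => 1 ≤ x.1.1 ∧ (F x).1 = i).map Subtype.val := by
  have hw : linExtOf F = (sortedElems F).map Subtype.val := rfl
  rw [block]
  conv_lhs => arg 2; rw [hw]
  rw [List.filter_map]
  refine congrArg _ (List.filter_congr fun x _ => ?_)
  by_cases hx : 1 ≤ x.1.1
  · simp [hx, zerosBefore_linExtOf hF (Nat.one_le_iff_ne_zero.1 hx)]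
  · simp [hx]

lemma blockWord_linExtOf (hF : IsCPPInf r P F) (i : ℕ) :
    blockWord r (linExtOf F) i =
      ((sortedLetters F).filter fun x => (F x).1 = i).map fun x => shiftLetter r (F x).1 x.1 := by
  rw [blockWord, block_linExtOf hF, List.map_map, filter_sortedElems_eq]
  refine List.map_congr_left fun x hx => ?_
  simp only [List.mem_filter, decide_eq_true_eq] at hx
  simp [hx.2]

lemma isColoredLinExt_coloredWordOf (hF : IsCPPInf r P F) :
    IsColoredLinExt r (linExtOf F) (coloredWordOf F) := by
  refine ⟨?_, fun i _ => blockWord_linExtOf hF i ▸ (List.filter_sublist).map _⟩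
  simp only [blockWord_linExtOf hF, ← Multiset.map_coe, ← Multiset.coe_mapAddMonoidHom, ← map_sum]
  rw [List.sum_range_filter_eq fun x _ => (isCPPInf_iff.1 hF).1 x]
  rfl

lemma isWordCPPInf_wordPartitionOf (hF : IsCPPInf r P F) :
    IsWordCPPInf r (coloredWordOf F) (wordPartitionOf F) := by
  have hcol := (isCPPInf_iff.1 hF).1
  refine ⟨fun p => ?_, fun p q hpq => ?_, fun p q hpq _ hlt => ?_, fun p m hm _ => Or.inl hm,
    fun p m hm _ h => absurd h.symm (by simp [wordPartitionOf]; omega), fun p htop => ?_⟩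
  · exact (Nat.zero_le _).trans_lt (hcol (letterAt F p))
  · have := valueKey_letterAt_lt hpq
    simp only [valueKey, pairKey, Prod.Lex.toLex_lt_toLex] at this
    exact Or.inr ⟨rfl, this.elim le_of_lt fun h => h.1.le⟩
  · have := valueKey_letterAt_lt hpq
    simp only [wordPartitionOf, get_coloredWordOf, shiftLetter_zero (shiftLetter_snd_lt _
      (P.col_lt _ (letterAt F _).2))] at hlt
    simp only [valueKey, pairKey, Prod.Lex.toLex_lt_toLex,
      letterKey_lt_letterKey] at this
    exact Or.inr ⟨rfl, this.resolve_right fun h =>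
      lt_asymm (letterKey_lt_letterKey.2 h.2) (letterKey_lt_letterKey.2 hlt)⟩
  · rw [get_coloredWordOf]
    exact (shiftLetter_snd_eq_zero_iff (hcol _) (P.col_lt _ (letterAt F p).2)).2
      (hF.2.2.2.2 _ htop)

end ToWordPartition

section WordPairs

variable {r : ℕ} {P : ColoredPoset r} {w u : List (ℕ × ℕ)} {g : Fin u.length → ℕ × ℕ∞}

def wordPairs (u : List (ℕ × ℕ)) (g : Fin u.length → ℕ × ℕ∞) : List ((ℕ × ℕ) × ℕ∞) :=
  List.ofFn fun p => (u.get p, (g p).2)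

lemma map_fst_wordPairs : (wordPairs u g).map Prod.fst = u := by
  simp [wordPairs, List.map_ofFn, Function.comp_def]

lemma pairwise_wordPairs (hw : IsLinExt P w) (hu : IsColoredLinExt r w u)
    (hg : IsWordCPPInf r u g) : (wordPairs u g).Pairwise (pairKey · < pairKey ·) :=
  List.pairwise_ofFn.2 fun _ _ hpq =>
    hg.pairKey_strictMono (hu.nodup hw) (fun _ => hu.one_le_fst_and_snd_lt) hpq

lemma mem_wordPairs_iff (hw : IsLinExt P w) (hu : IsColoredLinExt r w u) {z : (ℕ × ℕ) × ℕ∞} :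
    z ∈ wordPairs u g ↔ ∃ x : {x // x ∈ P.elems}, x.1.1 ≠ 0 ∧
      z = (shiftLetter r (ofWordPartition hw hu g x).1 x.1, (ofWordPartition hw hu g x).2) := by
  simp only [wordPairs, List.mem_ofFn]
  constructor
  · rintro ⟨p, rfl⟩
    obtain ⟨i, -, hi⟩ := hu.mem_iff.1 (List.get_mem u p)
    obtain ⟨y, hy, hyp⟩ := List.mem_map.1 hi
    obtain ⟨hyw, hy1, rfl⟩ := mem_block.1 hy
    have hy0 : y.1 ≠ 0 := Nat.one_le_iff_ne_zero.1 hy1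
    refine ⟨⟨y, hw.mem_iff.1 hyw⟩, hy0, ?_⟩
    rw [ofWordPartition_of_ne_zero hy0, shiftPos_eq_of_get_eq hy0 hyp.symm, hyp]
  · rintro ⟨x, hx, rfl⟩
    exact ⟨shiftPos hw hu x hx, by rw [ofWordPartition_of_ne_zero hx, get_shiftPos]⟩

lemma wordPairs_eq_of_ofWordPartition_eq {w' u' : List (ℕ × ℕ)}
    {g' : Fin u'.length → ℕ × ℕ∞} (hw : IsLinExt P w) (hu : IsColoredLinExt r w u)
    (hg : IsWordCPPInf r u g) (hw' : IsLinExt P w') (hu' : IsColoredLinExt r w' u')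
    (hg' : IsWordCPPInf r u' g') (h : ofWordPartition hw hu g = ofWordPartition hw' hu' g') :
    wordPairs u g = wordPairs u' g' := by
  have hnd : ∀ {l : List ((ℕ × ℕ) × ℕ∞)}, l.Pairwise (pairKey · < pairKey ·) → l.Nodup :=
    fun hl => hl.imp fun h => ne_of_apply_ne pairKey h.ne
  refine List.Perm.eq_of_pairwise (fun _ _ _ _ h h' => (lt_asymm h h').elim)
    (pairwise_wordPairs hw hu hg) (pairwise_wordPairs hw' hu' hg') ?_
  rw [List.perm_ext_iff_of_nodup (hnd (pairwise_wordPairs hw hu hg))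
    (hnd (pairwise_wordPairs hw' hu' hg'))]
  intro z
  rw [mem_wordPairs_iff hw hu, mem_wordPairs_iff hw' hu', h]

end WordPairs

section Bijection

variable {r : ℕ} {P : ColoredPoset r}

lemma pairwise_sortKey_ofWordPartition {w u : List (ℕ × ℕ)} {g : Fin u.length → ℕ × ℕ∞}
    (hw : IsLinExt P w) (hu : IsColoredLinExt r w u) (hg : IsWordCPPInf r u g) :
    w.Pairwise fun a b => ∀ ha hb, sortKey (ofWordPartition hw hu g) ⟨a, ha⟩ <
      sortKey (ofWordPartition hw hu g) ⟨b, hb⟩ :=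
  hw.1.pairwise_iff_idxOf_lt.2 fun _ _ _ _ hab _ _ => sortKey_ofWordPartition_lt hg hab

lemma linExt_eq_of_ofWordPartition_eq {w u w' u' : List (ℕ × ℕ)} {g : Fin u.length → ℕ × ℕ∞}
    {g' : Fin u'.length → ℕ × ℕ∞} (hw : IsLinExt P w) (hu : IsColoredLinExt r w u)
    (hg : IsWordCPPInf r u g) (hw' : IsLinExt P w') (hu' : IsColoredLinExt r w' u')
    (hg' : IsWordCPPInf r u' g') (h : ofWordPartition hw hu g = ofWordPartition hw' hu' g') :
    w = w' := by
  refine List.Perm.eq_of_pairwise (fun a b ha hb hab hba =>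
      (lt_asymm (hab (hw.mem_iff.1 ha) (hw'.mem_iff.1 hb)) (hba _ _)).elim)
    (pairwise_sortKey_ofWordPartition hw hu hg)
    (h ▸ pairwise_sortKey_ofWordPartition hw' hu' hg') ?_
  rw [List.perm_ext_iff_of_nodup hw.1 hw'.1]
  exact fun x => hw.mem_iff.trans hw'.mem_iff.symm

/-- `⊔_{w ∈ L(P)} ⊔_{π ∈ CL(w)} A(π)`. -/
def WordPartitions (r : ℕ) (P : ColoredPoset r) : Type :=
  (w : {w : List (ℕ × ℕ) // IsLinExt P w}) ×
    (u : {u : List (ℕ × ℕ) // IsColoredLinExt r w.1 u}) ×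
      {f : Fin u.1.length → ℕ × ℕ∞ // IsWordCPPInf r u.1 f}

noncomputable def toWordPartitions (F : {f // IsCPPInf r P f}) : WordPartitions r P :=
  ⟨⟨linExtOf F.1, isLinExt_linExtOf F.2⟩, ⟨coloredWordOf F.1, isColoredLinExt_coloredWordOf F.2⟩,
    ⟨wordPartitionOf F.1, isWordCPPInf_wordPartitionOf F.2⟩⟩

def ofWordPartitions (t : WordPartitions r P) : {f // IsCPPInf r P f} :=
  ⟨ofWordPartition t.1.2 t.2.1.2 t.2.2.1, isCPPInf_ofWordPartition t.2.2.2⟩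

lemma ofWordPartitions_toWordPartitions (F : {f // IsCPPInf r P f}) :
    ofWordPartitions (toWordPartitions F) = F := by
  obtain ⟨F, hF⟩ := F
  refine Subtype.ext (funext fun x => ?_)
  by_cases hx : x.1.1 = 0
  · exact (ofWordPartition_of_zero hx).trans (hF.apply_of_zero hx).symm
  · have hxs : x ∈ sortedLetters F := mem_sortedLetters.2 (Nat.one_le_iff_ne_zero.2 hx)
    let p : Fin (coloredWordOf F).length :=
      ⟨(sortedLetters F).idxOf x, length_coloredWordOf F ▸ List.idxOf_lt_length_iff.2 hxs⟩
    have hp : letterAt F p = x := List.getElem_idxOf _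
    have hzb := zerosBefore_linExtOf hF hx
    show ofWordPartition (isLinExt_linExtOf hF) (isColoredLinExt_coloredWordOf hF)
      (wordPartitionOf F) x = F x
    rw [ofWordPartition_of_ne_zero hx, shiftPos_eq_of_get_eq hx (p := p)
      (by rw [get_coloredWordOf, hp, hzb]), wordPartitionOf, hp, hzb]

lemma ofWordPartitions_injective : Function.Injective (ofWordPartitions (P := P)) := by
  rintro ⟨⟨w, hw⟩, ⟨u, hu⟩, ⟨g, hg⟩⟩ ⟨⟨w', hw'⟩, ⟨u', hu'⟩, ⟨g', hg'⟩⟩ h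
  have hF : ofWordPartition hw hu g = ofWordPartition hw' hu' g' := congrArg Subtype.val h
  have hpairs := wordPairs_eq_of_ofWordPartition_eq hw hu hg hw' hu' hg' hF
  obtain rfl := linExt_eq_of_ofWordPartition_eq hw hu hg hw' hu' hg' hF
  obtain rfl : u = u' := by
    simpa only [map_fst_wordPairs] using congrArg (List.map Prod.fst) hpairs
  obtain rfl : g = g' := funext fun p => Prod.ext
    ((hg.fst_eq_zero (fun _ hy => (hu.one_le_fst_and_snd_lt hy).1) p).trans
      (hg'.fst_eq_zero (fun _ hy => (hu'.one_le_fst_and_snd_lt hy).1) p).symm)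
    (Prod.ext_iff.1 (congrFun (List.ofFn_injective hpairs) p)).2
  rfl

noncomputable def equivWordPartitions : {f // IsCPPInf r P f} ≃ WordPartitions r P where
  toFun := toWordPartitions
  invFun := ofWordPartitions
  left_inv := ofWordPartitions_toWordPartitions
  right_inv _ := ofWordPartitions_injective (ofWordPartitions_toWordPartitions _)

end Bijection

theorem fundamental_theorem_colored_P_partitions_general (r : ℕ) (P : ColoredPoset r) :
    Nonempty
      ({f : {x // x ∈ P.elems} → ℕ × ℕ∞ // IsCPPInf r P f} ≃
        (w : {w : List (ℕ × ℕ) // IsLinExt P w}) ×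
          (u : {u : List (ℕ × ℕ) // IsColoredLinExt r w.1 u}) ×
            {f : Fin u.1.length → ℕ × ℕ∞ // IsWordCPPInf r u.1 f}) :=
  ⟨equivWordPartitions⟩

/-- Fundamental Theorem of Colored `P`-partitions: there is a bijection between
`A(P)` and the disjoint union, over all linear extensions `w ∈ L(P)` and all
colored words `π ∈ CL(w)`, of the sets `A(π)`. -/
theorem fundamental_theorem_colored_P_partitions (r n : ℕ) (hr : 1 ≤ r) (hn : 1 ≤ n)
    (P : ColoredPoset r) :
    Nonempty
      ({f : {x // x ∈ P.elems} → ℕ × ℕ∞ // IsCPPInf r P f} ≃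
        (w : {w : List (ℕ × ℕ) // IsLinExt P w}) ×
          (u : {u : List (ℕ × ℕ) // IsColoredLinExt r w.1 u}) ×
            {f : Fin u.1.length → ℕ × ℕ∞ // IsWordCPPInf r u.1 f}) :=
  fundamental_theorem_colored_P_partitions_general r P
end
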